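/- arXiv:2201.13253 — 10 statements merged into one kernel-verified Lean document; each statement's English description precedes it below -/
import Mathlib

section
/- For every integer m ≥ 1 and all integers 0 ≤ k ≤ n, the entry B_m(n,k) equals the coefficient of X^n in the formal power series (1−X^m)^{-1}·(X·(1−X)^{-1})^{n−k}. Equivalently, the m-th Pascal-like triangle of the first family is the row-reversed (1/(1−x^m), x/(1−x)) Riordan array. -/
/-!
Both sides obey the same boundary conditions and Pascal's rule. On the diagonal `k = n` the
right-hand side is `[X^n] (1 - X^m)⁻¹ = [m ∣ n]`; in column `0` it is `[X^n] X^n (1 - X)⁻ⁿ g = 1`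
with `g = (1 - X^m)⁻¹`. Pascal's rule comes from `f = X (f + 1)` for `f = X (1 - X)⁻¹`, which gives
`g f^(j+1) = X (g f^(j+1) + g f^j)`.
-/

/-- The `m`-th Pascal-like triangle of the first family: `B m n 0 = 1`,
`B m n n = 1` if `m ∣ n` and `0` otherwise, and Pascal's recurrence
`B m n k = B m (n-1) k + B m (n-1) (k-1)` for `0 < k < n`.
(Values with `k > n` are set to `0`.) -/
def B (m : ℕ) : ℕ → ℕ → ℕ
  | _, 0 => 1
  | 0, _ + 1 => 0
  | n + 1, k + 1 =>
      if n + 1 = k + 1 then (if m ∣ (n + 1) then 1 else 0)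
      else if n + 1 < k + 1 then 0
      else B m n (k + 1) + B m n k

theorem B_zero_right (m n : ℕ) : B m n 0 = 1 := by
  cases n <;> rfl

theorem B_self (m n : ℕ) : B m n n = if m ∣ n then 1 else 0 := by
  cases n <;> simp [B]

theorem B_succ_succ {m n k : ℕ} (h : k + 1 ≤ n) :
    B m (n + 1) (k + 1) = B m n (k + 1) + B m n k := by
  rw [B, if_neg (by omega), if_neg (by omega)]

open PowerSeries

variable {K : Type*} [Field K]

theorem coeff_inv_one_sub_X_pow {m : ℕ} (hm : m ≠ 0) (n : ℕ) :
    coeff n (1 - X ^ m : K⟦X⟧)⁻¹ = if m ∣ n then 1 else 0 := by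
  have hmk : (1 - X ^ m : K⟦X⟧) * mk (fun n => if m ∣ n then 1 else 0) = 1 := by
    ext n
    rw [sub_mul, one_mul, map_sub, coeff_X_pow_mul', coeff_mk, coeff_one]
    by_cases hmn : m ≤ n
    · have hdvd : m ∣ n - m ↔ m ∣ n := Nat.dvd_sub_iff_left hmn dvd_rfl
      simp [hmn, hdvd, show n ≠ 0 by omega]
    · have hdvd : m ∣ n ↔ n = 0 :=
        ⟨fun h => Nat.eq_zero_of_dvd_of_lt h (by omega), fun h => h ▸ dvd_zero m⟩
      simp [hmn, hdvd]
  rw [← (eq_inv_iff_mul_eq_one (by simp [zero_pow hm])).2 (by rwa [mul_comm]), coeff_mk]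

theorem X_mul_inv_one_sub_X_eq : (X * (1 - X)⁻¹ : K⟦X⟧) = X * (X * (1 - X)⁻¹ + 1) := by
  have h : (1 - X : K⟦X⟧) * (1 - X)⁻¹ = 1 := PowerSeries.mul_inv_cancel _ (by simp)
  linear_combination X * h

theorem coeff_succ_mul_pow_succ (g : K⟦X⟧) (n j : ℕ) :
    coeff (n + 1) (g * (X * (1 - X)⁻¹) ^ (j + 1)) =
      coeff n (g * (X * (1 - X)⁻¹) ^ (j + 1)) + coeff n (g * (X * (1 - X)⁻¹) ^ j) := by
  have h : g * (X * (1 - X)⁻¹) ^ (j + 1) =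
      X * (g * (X * (1 - X)⁻¹) ^ (j + 1) + g * (X * (1 - X)⁻¹) ^ j) := by
    linear_combination g * (X * (1 - X)⁻¹) ^ j * X_mul_inv_one_sub_X_eq (K := K)
  rw [congrArg (coeff (n + 1)) h, coeff_succ_X_mul, map_add]

theorem coeff_mul_pow_self (g : K⟦X⟧) (n : ℕ) :
    coeff n (g * (X * (1 - X)⁻¹) ^ n) = constantCoeff g := by
  rw [mul_pow, mul_left_comm, coeff_X_pow_mul', if_pos le_rfl, Nat.sub_self,
    coeff_zero_eq_constantCoeff_apply]
  simp [constantCoeff_inv]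

theorem cast_B_self_eq_coeff (m : ℕ) (hm : m ≠ 0) (n : ℕ) :
    (B m n n : K) = coeff n ((1 - X ^ m)⁻¹ * (X * (1 - X)⁻¹) ^ (n - n)) := by
  rw [B_self, Nat.sub_self, pow_zero, mul_one, coeff_inv_one_sub_X_pow hm]
  split_ifs <;> simp

/-- The `m`-th triangle of the first family is the row-reversed
`(1/(1-x^m), x/(1-x))` Riordan array: `B m n k` is the coefficient of `X^n`
in `(1 - X^m)⁻¹ * (X * (1 - X)⁻¹)^(n - k)`. -/
theorem stmt_0 (m : ℕ) (hm : 1 ≤ m) (n k : ℕ) (hk : k ≤ n) :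
    (B m n k : ℚ) = PowerSeries.coeff (R := ℚ) n
      ((1 - PowerSeries.X ^ m)⁻¹ *
        (PowerSeries.X * (1 - PowerSeries.X)⁻¹) ^ (n - k)) := by
  have hm0 : m ≠ 0 := by omega
  induction n generalizing k with
  | zero =>
    obtain rfl : k = 0 := by omega
    exact cast_B_self_eq_coeff m hm0 0
  | succ n ih =>
    rcases hk.eq_or_lt with rfl | hlt
    · exact cast_B_self_eq_coeff m hm0 _
    rcases k with _ | k
    · rw [B_zero_right, Nat.sub_zero, coeff_mul_pow_self, ← coeff_zero_eq_constantCoeff_apply,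
        coeff_inv_one_sub_X_pow hm0, if_pos (dvd_zero m), Nat.cast_one]
    · rw [B_succ_succ (by omega), Nat.cast_add, ih _ (by omega), ih _ (by omega),
        show n + 1 - (k + 1) = n - (k + 1) + 1 by omega, coeff_succ_mul_pow_succ,
        show n - k = n - (k + 1) + 1 by omega, add_comm]
end

section
/- For every integer m ≥ 1, the generating function of the row sums r_n = Σ_{k=0}^{n} B_m(n,k) of the m-th triangle of the first family is 1/((1+x+⋯+x^{m−1})(1−2x)); that is, in the ring of formal power series over ℤ, (1 + X + ⋯ + X^{m−1})·(1 − 2X) · Σ_{n≥0} r_n X^n = 1. -/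
open PowerSeries Finset

namespace B

variable (m : ℕ)

theorem zero_right (n : ℕ) : B m n 0 = 1 := by
  cases n <;> rfl

theorem self (n : ℕ) : B m n n = if m ∣ n then 1 else 0 := by
  cases n with
  | zero => simp [B]
  | succ n => simp [B]

theorem succ_succ {n k : ℕ} (h : k < n) : B m (n + 1) (k + 1) = B m n (k + 1) + B m n k := by
  rw [B, if_neg (by omega), if_neg (by omega)]

def rowSum (n : ℕ) : ℕ :=
  ∑ k ∈ range (n + 1), B m n k

theorem rowSum_succ_add (n : ℕ) :
    rowSum m (n + 1) + (if m ∣ n then 1 else 0) =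
      (if m ∣ n + 1 then 1 else 0) + 2 * rowSum m n := by
  have interior : ∑ k ∈ range n, B m (n + 1) (k + 1) =
      ∑ k ∈ range n, B m n (k + 1) + ∑ k ∈ range n, B m n k := by
    rw [← sum_add_distrib]
    exact sum_congr rfl fun k hk => succ_succ m (mem_range.mp hk)
  have shifted : rowSum m n = ∑ k ∈ range n, B m n (k + 1) + 1 := by
    rw [rowSum, sum_range_succ', zero_right]
  have truncated : rowSum m n = ∑ k ∈ range n, B m n k + if m ∣ n then 1 else 0 := by
    rw [rowSum, sum_range_succ, self]
  rw [rowSum, sum_range_succ', sum_range_succ, interior, self, zero_right]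
  linarith

end B

theorem PowerSeries.add_X_mul_eq_of_coeff {R : Type*} [CommSemiring R] {φ ψ : R⟦X⟧} {c : R}
    (h₀ : coeff 0 φ = coeff 0 ψ)
    (h : ∀ n, coeff (n + 1) φ + coeff n ψ = coeff (n + 1) ψ + c * coeff n φ) :
    φ + X * ψ = ψ + C c * X * φ := by
  ext (_ | n)
  · simpa using h₀
  · simpa [mul_assoc, coeff_succ_X_mul, coeff_C_mul] using h n

theorem PowerSeries.one_sub_X_pow_mul_expand_mk_one {R : Type*} [CommRing R] {m : ℕ}
    (hm : m ≠ 0) : (1 - X ^ m) * expand m hm (mk 1 : R⟦X⟧) = 1 := by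
  rw [← expand_X m hm, ← map_one (expand m hm), ← map_sub, ← map_mul, mul_comm,
    mk_one_mul_one_sub_eq_one, map_one]

/-- The generating function of the row sums of the `m`-th triangle of the first
family is `1/((1 + x + ⋯ + x^(m-1))(1 - 2x))`. -/
theorem stmt_3 (m : ℕ) (hm : 1 ≤ m) :
    (∑ i ∈ Finset.range m, PowerSeries.X ^ i) * (1 - 2 * PowerSeries.X) *
      PowerSeries.mk (fun n => ((∑ k ∈ Finset.range (n + 1), B m n k : ℕ) : ℤ)) = 1 := by
  have hm₀ : m ≠ 0 := by omega
  set D : ℤ⟦X⟧ := expand m hm₀ (mk 1)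
  have coeff_D (n : ℕ) : coeff n D = if m ∣ n then 1 else 0 := by
    simp [D, coeff_expand]
  have recurrence : PowerSeries.mk (fun n => (B.rowSum m n : ℤ)) + X * D =
      D + C 2 * X * PowerSeries.mk (fun n => (B.rowSum m n : ℤ)) := by
    refine add_X_mul_eq_of_coeff ?_ fun n => ?_
    · simp [coeff_D, B.rowSum, B.zero_right]
    · simp only [coeff_mk, coeff_D]
      exact_mod_cast B.rowSum_succ_add m n
  rw [map_ofNat] at recurrence
  change _ * _ * PowerSeries.mk (fun n => (B.rowSum m n : ℤ)) = 1
  linear_combination (∑ i ∈ range m, (X : ℤ⟦X⟧) ^ i) * recurrence +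
    D * geom_sum_mul_neg (X : ℤ⟦X⟧) m + one_sub_X_pow_mul_expand_mk_one (R := ℤ) hm₀
end

section
/- For all integers m ≥ 1, j ≥ 0, 0 ≤ r ≤ m−1, and k ≥ 0, the number of k-element subsets of {1,…,mj+r} in which no two elements differ by exactly m equals the coefficient of x^k in the polynomial f_{j+1}(x)^{m−r} · f_{j+2}(x)^{r}; that is, C_m(mj+r, k) = [x^k] f_{j+1}^{m−r} f_{j+2}^{r}. -/
/-- `Cm m N k` is the number of `k`-element subsets of `{1, …, N}` in which
no two elements differ by exactly `m`. -/
def Cm (m N k : ℕ) : ℕ :=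
  (((Finset.Icc 1 N).powersetCard k).filter (fun S => ∀ a ∈ S, a + m ∉ S)).card

/-- Fibonacci polynomials: `f₀ = f₁ = 1` and `fₙ = fₙ₋₁ + x·fₙ₋₂`. -/
noncomputable def fibPoly : ℕ → Polynomial ℕ
  | 0 => 1
  | 1 => 1
  | n + 2 => fibPoly (n + 1) + Polynomial.X * fibPoly n

open Finset Polynomial

/-- counting for a general ground set -/
def D (m : ℕ) (G : Finset ℕ) (k : ℕ) : ℕ :=
  ((G.powersetCard k).filter (fun S => ∀ a ∈ S, a + m ∉ S)).card

lemma D_zero (m : ℕ) (G : Finset ℕ) : D m G 0 = 1 := by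
  rw [D, Finset.powersetCard_zero, Finset.filter_singleton]
  simp

lemma D_empty (m k : ℕ) : D m (∅ : Finset ℕ) k = if k = 0 then 1 else 0 := by
  rcases k with _ | k
  · simp [D_zero]
  · rw [D]
    have : Finset.powersetCard (k+1) (∅ : Finset ℕ) = ∅ := by
      rw [Finset.powersetCard_eq_empty]
      simp
    simp [this]

lemma fibPoly_coeff_zero (n : ℕ) : (fibPoly n).coeff 0 = 1 := by
  induction n using Nat.strong_induction_on with
  | _ n ih =>
    match n with
    | 0 => simp [fibPoly]
    | 1 => simp [fibPoly]
    | n + 2 =>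
      rw [fibPoly]
      rw [Polynomial.coeff_add, ih (n+1) (by omega)]
      simp [Polynomial.coeff_X_mul_zero]

lemma D_erase (m : ℕ) (hm : 1 ≤ m) (G : Finset ℕ) (x y : ℕ) (hx : x ∈ G)
    (hxm : x + m ∉ G) (hy : y + m = x) (k : ℕ) :
    D m G (k + 1) = D m (G.erase x) (k + 1) + D m ((G.erase x).erase y) k := by
  classical
  set P : Finset ℕ → Prop := fun S => ∀ a ∈ S, a + m ∉ S with hP
  have hsplit := Finset.card_filter_add_card_filter_not
    (s := (G.powersetCard (k+1)).filter P) (fun S => x ∈ S)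
  have hD : D m G (k+1) = ((G.powersetCard (k+1)).filter P).card := rfl
  -- part without x
  have hwo : (((G.powersetCard (k+1)).filter P).filter (fun S => ¬ x ∈ S))
      = ((G.erase x).powersetCard (k+1)).filter P := by
    ext S
    simp only [Finset.mem_filter, Finset.mem_powersetCard, Finset.subset_erase]
    tauto
  -- part with x
  have hwi : (((G.powersetCard (k+1)).filter P).filter (fun S => x ∈ S)).card
      = ((((G.erase x).erase y).powersetCard k).filter P).card := by
    refine Finset.card_bij' (fun S _ => S.erase x) (fun S _ => insert x S) ?_ ?_ ?_ ?_
    · intro S hS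
      simp only [Finset.mem_filter, Finset.mem_powersetCard] at hS ⊢
      obtain ⟨⟨⟨hsub, hcard⟩, hpred⟩, hxS⟩ := hS
      refine ⟨⟨?_, ?_⟩, ?_⟩
      · intro a ha
        rw [Finset.mem_erase] at ha ⊢
        rw [Finset.mem_erase]
        obtain ⟨hax, haS⟩ := ha
        refine ⟨?_, hax, hsub haS⟩
        intro hay
        exact hpred a haS (by rw [hay, hy]; exact hxS)
      · rw [Finset.card_erase_of_mem hxS, hcard]
        omega
      · intro a ha
        have haS : a ∈ S := Finset.mem_of_mem_erase ha
        intro hc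
        exact hpred a haS (Finset.mem_of_mem_erase hc)
    · intro S hS
      simp only [Finset.mem_filter, Finset.mem_powersetCard] at hS ⊢
      obtain ⟨⟨hsub, hcard⟩, hpred⟩ := hS
      have hxS : x ∉ S := by
        intro hc
        have := hsub hc
        rw [Finset.mem_erase, Finset.mem_erase] at this
        exact this.2.1 rfl
      have hyS : y ∉ S := by
        intro hc
        have := hsub hc
        rw [Finset.mem_erase] at this
        exact this.1 rfl
      refine ⟨⟨⟨?_, ?_⟩, ?_⟩, Finset.mem_insert_self x S⟩
      · intro a ha
        rcases Finset.mem_insert.mp ha with h | h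
        · rw [h]; exact hx
        · have := hsub h
          rw [Finset.mem_erase, Finset.mem_erase] at this
          exact this.2.2
      · rw [Finset.card_insert_of_notMem hxS, hcard]
      · intro a ha
        rcases Finset.mem_insert.mp ha with h | h
        · subst h
          intro hc
          rcases Finset.mem_insert.mp hc with h2 | h2
          · omega
          · have := hsub h2
            rw [Finset.mem_erase, Finset.mem_erase] at this
            exact hxm this.2.2
        · intro hc
          rcases Finset.mem_insert.mp hc with h2 | h2
          · exact hyS ((show a = y by omega) ▸ h)
          · exact hpred a h h2
    · intro S hS
      simp only [Finset.mem_filter] at hS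
      exact Finset.insert_erase hS.2
    · intro S hS
      simp only [Finset.mem_filter, Finset.mem_powersetCard] at hS
      apply Finset.erase_insert
      intro hc
      have := hS.1.1 hc
      rw [Finset.mem_erase, Finset.mem_erase] at this
      exact this.2.1 rfl
  have hD2 : D m (G.erase x) (k+1) = (((G.erase x).powersetCard (k+1)).filter P).card := rfl
  have hD3 : D m ((G.erase x).erase y) k
      = ((((G.erase x).erase y).powersetCard k).filter P).card := rfl
  rw [hwo] at hsplit
  omega

lemma D_union (m : ℕ) (A B : Finset ℕ) (hAB : Disjoint A B)
    (h1 : ∀ a ∈ A, a + m ∉ B) (h2 : ∀ b ∈ B, b + m ∉ A) (k : ℕ) :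
    D m (A ∪ B) k = ∑ i ∈ Finset.range (k + 1), D m A i * D m B (k - i) := by
  classical
  set P : Finset ℕ → Prop := fun S => ∀ a ∈ S, a + m ∉ S with hP
  have hcard : ∀ i, D m A i * D m B (k - i)
      = (((A.powersetCard i).filter P) ×ˢ ((B.powersetCard (k - i)).filter P)).card := by
    intro i
    rw [Finset.card_product]
    rfl
  rw [Finset.sum_congr rfl (fun i _ => hcard i)]
  rw [← Finset.card_sigma]
  show (((A ∪ B).powersetCard k).filter P).card = _
  refine Finset.card_bij' (fun S _ => ⟨(S ∩ A).card, (S ∩ A, S ∩ B)⟩)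
    (fun p _ => p.2.1 ∪ p.2.2) ?_ ?_ ?_ ?_
  · intro S hS
    simp only [Finset.mem_filter, Finset.mem_powersetCard] at hS
    obtain ⟨⟨hsub, hcardS⟩, hpred⟩ := hS
    have hsplitS : S = (S ∩ A) ∪ (S ∩ B) := by
      rw [← Finset.inter_union_distrib_left]
      exact (Finset.inter_eq_left.mpr hsub).symm
    have hdisj : Disjoint (S ∩ A) (S ∩ B) :=
      hAB.mono Finset.inter_subset_right Finset.inter_subset_right
    have hsum : (S ∩ A).card + (S ∩ B).card = k := by
      rw [← Finset.card_union_of_disjoint hdisj, ← hsplitS, hcardS]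
    show (⟨(S ∩ A).card, (S ∩ A, S ∩ B)⟩ : (_ : ℕ) × (Finset ℕ × Finset ℕ))
      ∈ (Finset.range (k+1)).sigma
        (fun i => ((A.powersetCard i).filter P) ×ˢ ((B.powersetCard (k - i)).filter P))
    refine Finset.mem_sigma.mpr ⟨?_, ?_⟩
    · show (S ∩ A).card ∈ Finset.range (k+1)
      exact Finset.mem_range.mpr (by omega)
    · show (S ∩ A, S ∩ B) ∈ ((A.powersetCard ((S ∩ A).card)).filter P)
        ×ˢ ((B.powersetCard (k - (S ∩ A).card)).filter P)
      refine Finset.mem_product.mpr ⟨Finset.mem_filter.mpr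
        ⟨Finset.mem_powersetCard.mpr ⟨Finset.inter_subset_right, rfl⟩, ?_⟩,
      Finset.mem_filter.mpr
        ⟨Finset.mem_powersetCard.mpr ⟨Finset.inter_subset_right,
          (by show (S ∩ B).card = k - (S ∩ A).card; omega)⟩, ?_⟩⟩
      · show P (S ∩ A)
        intro a ha hc
        exact hpred a (Finset.mem_of_mem_inter_left ha) (Finset.mem_of_mem_inter_left hc)
      · show P (S ∩ B)
        intro a ha hc
        exact hpred a (Finset.mem_of_mem_inter_left ha) (Finset.mem_of_mem_inter_left hc)
  · rintro ⟨i, Q, R⟩ hp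
    simp only [Finset.mem_sigma, Finset.mem_range, Finset.mem_product,
      Finset.mem_filter, Finset.mem_powersetCard] at hp
    obtain ⟨hik, ⟨⟨hQA, hQc⟩, hQp⟩, ⟨hRB, hRc⟩, hRp⟩ := hp
    have hdisj : Disjoint Q R := hAB.mono hQA hRB
    simp only [Finset.mem_filter, Finset.mem_powersetCard]
    refine ⟨⟨Finset.union_subset (hQA.trans Finset.subset_union_left)
      (hRB.trans Finset.subset_union_right), ?_⟩, ?_⟩
    · rw [Finset.card_union_of_disjoint hdisj, hQc, hRc]
      omega
    · intro a ha hc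
      rcases Finset.mem_union.mp ha with h | h
      · rcases Finset.mem_union.mp hc with hd | hd
        · exact hQp a h hd
        · exact h1 a (hQA h) (hRB hd)
      · rcases Finset.mem_union.mp hc with hd | hd
        · exact h2 a (hRB h) (hQA hd)
        · exact hRp a h hd
  · intro S hS
    simp only [Finset.mem_filter, Finset.mem_powersetCard] at hS
    show (S ∩ A) ∪ (S ∩ B) = S
    rw [← Finset.inter_union_distrib_left]
    exact Finset.inter_eq_left.mpr hS.1.1
  · rintro ⟨i, Q, R⟩ hp
    simp only [Finset.mem_sigma, Finset.mem_range, Finset.mem_product,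
      Finset.mem_filter, Finset.mem_powersetCard] at hp
    obtain ⟨hik, ⟨⟨hQA, hQc⟩, hQp⟩, ⟨hRB, hRc⟩, hRp⟩ := hp
    have hRnA : ∀ a ∈ R, a ∉ A := fun a ha => Finset.disjoint_right.mp hAB (hRB ha)
    have hQnB : ∀ a ∈ Q, a ∉ B := fun a ha => Finset.disjoint_left.mp hAB (hQA ha)
    have h1' : (Q ∪ R) ∩ A = Q := by
      ext a
      simp only [Finset.mem_inter, Finset.mem_union]
      constructor
      · rintro ⟨h | h, ha⟩
        · exact h
        · exact absurd ha (hRnA a h)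
      · intro h
        exact ⟨Or.inl h, hQA h⟩
    have h2' : (Q ∪ R) ∩ B = R := by
      ext a
      simp only [Finset.mem_inter, Finset.mem_union]
      constructor
      · rintro ⟨h | h, ha⟩
        · exact absurd ha (hQnB a h)
        · exact h
      · intro h
        exact ⟨Or.inr h, hRB h⟩
    show (⟨((Q ∪ R) ∩ A).card, ((Q ∪ R) ∩ A, (Q ∪ R) ∩ B)⟩
        : (_ : ℕ) × (Finset ℕ × Finset ℕ)) = ⟨i, (Q, R)⟩
    rw [h1', h2', hQc]

lemma block_erase (m a n : ℕ) (hm : 1 ≤ m) :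
    (((Finset.range (n+1)).image (fun i => a + i * m)).erase (a + n * m))
      = (Finset.range n).image (fun i => a + i * m) := by
  have hinj : ∀ i i' : ℕ, a + i * m = a + i' * m → i = i' := by
    intro i i' h
    have : i * m = i' * m := by omega
    exact Nat.eq_of_mul_eq_mul_right hm this
  rw [Finset.range_add_one, Finset.image_insert, Finset.erase_insert]
  simp only [Finset.mem_image, Finset.mem_range]
  rintro ⟨i, hi, hie⟩
  exact absurd (hinj i n hie) (by omega)

lemma D_block (m : ℕ) (hm : 1 ≤ m) (a : ℕ) (n k : ℕ) :
    D m ((Finset.range n).image (fun i => a + i * m)) k = (fibPoly (n + 1)).coeff k := by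
  induction n using Nat.strong_induction_on generalizing k with
  | _ n ih =>
    match n with
    | 0 =>
      simp only [Finset.range_zero, Finset.image_empty, D_empty]
      rw [show fibPoly 1 = (1 : Polynomial ℕ) from rfl, Polynomial.coeff_one]
    | 1 =>
      have hbl : (Finset.range 1).image (fun i => a + i * m) = {a} := by
        simp
      rw [hbl, show fibPoly 2 = fibPoly 1 + Polynomial.X * fibPoly 0 from rfl,
        show fibPoly 1 = 1 from rfl, show fibPoly 0 = 1 from rfl]
      match k with
      | 0 => simp [D_zero]
      | 1 =>
        rw [Polynomial.coeff_add, Polynomial.coeff_one, mul_one,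
          Polynomial.coeff_X_one]
        have h1 : ({a} : Finset ℕ).powersetCard 1 = {{a}} := by
          rw [show (1 : ℕ) = ({a} : Finset ℕ).card from rfl, Finset.powersetCard_self]
        rw [D, h1]
        rw [Finset.filter_singleton]
        have : ∀ b ∈ ({a} : Finset ℕ), b + m ∉ ({a} : Finset ℕ) := by
          intro b hb hc
          simp only [Finset.mem_singleton] at hb hc
          omega
        rw [if_pos this]
        simp
      | (k + 2) =>
        have h2 : ({a} : Finset ℕ).powersetCard (k + 2) = ∅ := by
          rw [Finset.powersetCard_eq_empty]
          simp
        rw [D, h2, Polynomial.coeff_add, Polynomial.coeff_one, mul_one,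
          Polynomial.coeff_X]
        simp
    | (n + 2) =>
      match k with
      | 0 => rw [D_zero, fibPoly_coeff_zero]
      | (k + 1) =>
        have hinj : ∀ i i' : ℕ, a + i * m = a + i' * m → i = i' := by
          intro i i' h
          have : i * m = i' * m := by omega
          exact Nat.eq_of_mul_eq_mul_right hm this
        have hx : a + (n + 1) * m ∈ (Finset.range (n+2)).image (fun i => a + i * m) := by
          exact Finset.mem_image.mpr ⟨n + 1, Finset.mem_range.mpr (by omega), rfl⟩
        have hxm : (a + (n + 1) * m) + m ∉ (Finset.range (n+2)).image (fun i => a + i * m) := by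
          rw [Finset.mem_image]
          rintro ⟨i, hi, hie⟩
          rw [Finset.mem_range] at hi
          have : a + i * m = a + (n + 2) * m := by rw [hie]; ring
          have := hinj i (n + 2) this
          omega
        have hy : (a + n * m) + m = a + (n + 1) * m := by ring
        have h2 : (((Finset.range (n+2)).image (fun i => a + i * m)).erase
            (a + (n+1) * m)).erase (a + n * m) = (Finset.range n).image (fun i => a + i * m) := by
          rw [block_erase m a (n+1) hm, block_erase m a n hm]
        rw [D_erase m hm _ _ _ hx hxm hy, h2, block_erase m a (n+1) hm,
          ih (n+1) (by omega), ih n (by omega)]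
        rw [show fibPoly (n + 3) = fibPoly (n + 2) + Polynomial.X * fibPoly (n + 1) from rfl]
        rw [Polynomial.coeff_add, Polynomial.coeff_X_mul]

lemma class_eq (m j r t : ℕ) (hm : 1 ≤ m) (hrm : r < m) (ht : t < m) :
    (Finset.Icc 1 (m * j + r)).filter (fun x => (x - 1) % m = t)
      = (Finset.range (if t < r then j + 1 else j)).image (fun i => t + 1 + i * m) := by
  ext x
  simp only [Finset.mem_filter, Finset.mem_Icc, Finset.mem_image, Finset.mem_range]
  constructor
  · rintro ⟨⟨hx1, hx2⟩, hmod⟩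
    set i := (x - 1) / m with hidef
    have h0 : m * i + (x - 1) % m = x - 1 := Nat.div_add_mod _ _
    have hcm : i * m = m * i := Nat.mul_comm i m
    refine ⟨i, ?_, by omega⟩
    by_contra hcon
    push_neg at hcon
    by_cases htr : t < r
    · rw [if_pos htr] at hcon
      have h1 : m * (j + 1) ≤ m * i := Nat.mul_le_mul_left m hcon
      have h2 : m * (j + 1) = m * j + m := by ring
      omega
    · rw [if_neg htr] at hcon
      have h1 : m * j ≤ m * i := Nat.mul_le_mul_left m hcon
      omega
  · rintro ⟨i, hi, rfl⟩
    have hcm : i * m = m * i := Nat.mul_comm i m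
    have hmod : (t + 1 + i * m - 1) % m = t := by
      have he : t + 1 + i * m - 1 = t + i * m := by omega
      rw [he, Nat.add_mul_mod_self_right]
      exact Nat.mod_eq_of_lt ht
    refine ⟨⟨by omega, ?_⟩, hmod⟩
    by_cases htr : t < r
    · rw [if_pos htr] at hi
      have h1 : m * i ≤ m * j := Nat.mul_le_mul_left m (by omega)
      omega
    · rw [if_neg htr] at hi
      have h1 : m * (i + 1) ≤ m * j := Nat.mul_le_mul_left m (by omega)
      have h2 : m * (i + 1) = m * i + m := by ring
      omega

/-- The number of `k`-subsets of `{1, …, mj + r}` with no two elements differing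
by exactly `m` is the coefficient of `x^k` in `f_{j+1}^(m-r) * f_{j+2}^r`. -/
theorem stmt_9 (m j r k : ℕ) (hm : 1 ≤ m) (hr : r ≤ m - 1) :
    Cm m (m * j + r) k
      = (fibPoly (j + 1) ^ (m - r) * fibPoly (j + 2) ^ r).coeff k := by
  classical
  have hrm : r < m := by omega
  have key : ∀ t, t ≤ m →
      ∀ k, D m ((Finset.Icc 1 (m * j + r)).filter (fun x => (x - 1) % m < t)) k
        = (∏ c ∈ Finset.range t, fibPoly ((if c < r then j + 1 else j) + 1)).coeff k := by
    intro t
    induction t with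
    | zero =>
      intro _ k
      have he : (Finset.Icc 1 (m * j + r)).filter (fun x => (x - 1) % m < 0) = ∅ := by
        apply Finset.filter_false_of_mem
        intro x _
        omega
      rw [he, Finset.prod_range_zero, D_empty, Polynomial.coeff_one]
    | succ t iht =>
      intro htm k
      have ht : t < m := htm
      set A := (Finset.Icc 1 (m * j + r)).filter (fun x => (x - 1) % m < t) with hA
      set B := (Finset.range (if t < r then j + 1 else j)).image
        (fun i => t + 1 + i * m) with hB
      have hU : (Finset.Icc 1 (m * j + r)).filter (fun x => (x - 1) % m < t + 1)
          = A ∪ B := by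
        rw [hA, hB, ← class_eq m j r t hm hrm ht, ← Finset.filter_or]
        apply Finset.filter_congr
        intro x _
        exact ⟨fun h => by omega, fun h => by omega⟩
      have hBmod : ∀ b ∈ B, (b - 1) % m = t := by
        intro b hb
        rw [hB, ← class_eq m j r t hm hrm ht] at hb
        exact (Finset.mem_filter.mp hb).2
      have hAmod : ∀ a ∈ A, 1 ≤ a ∧ (a - 1) % m < t := by
        intro a ha
        rw [hA] at ha
        have := Finset.mem_filter.mp ha
        exact ⟨(Finset.mem_Icc.mp this.1).1, this.2⟩
      have hdisj : Disjoint A B := by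
        rw [Finset.disjoint_left]
        intro a haA haB
        have h1 := hAmod a haA
        have h2 := hBmod a haB
        omega
      have hshift : ∀ a, 1 ≤ a → (a + m - 1) % m = (a - 1) % m := by
        intro a ha
        have he : a + m - 1 = (a - 1) + m := by omega
        rw [he, Nat.add_mod_right]
      have hc1 : ∀ a ∈ A, a + m ∉ B := by
        intro a haA hc
        have h1 := hAmod a haA
        have h2 := hBmod _ hc
        rw [hshift a h1.1] at h2
        omega
      have hc2 : ∀ b ∈ B, b + m ∉ A := by
        intro b hbB hc
        have h2 := hBmod b hbB
        have hb1 : 1 ≤ b := by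
          rw [hB] at hbB
          obtain ⟨i, _, rfl⟩ := Finset.mem_image.mp hbB
          omega
        have h1 := hAmod _ hc
        rw [hshift b hb1] at h1
        omega
      rw [hU, D_union m A B hdisj hc1 hc2 k, Finset.prod_range_succ,
        Polynomial.coeff_mul, Finset.Nat.sum_antidiagonal_eq_sum_range_succ_mk]
      apply Finset.sum_congr rfl
      intro i _
      rw [iht (by omega) i]
      congr 1
      exact D_block m hm (t + 1) _ (k - i)
  have hfin : (Finset.Icc 1 (m * j + r)).filter (fun x => (x - 1) % m < m)
      = Finset.Icc 1 (m * j + r) := by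
    apply Finset.filter_true_of_mem
    intro x _
    exact Nat.mod_lt _ (by omega)
  have hCm : Cm m (m * j + r) k = D m (Finset.Icc 1 (m * j + r)) k := rfl
  rw [hCm, ← hfin, key m le_rfl k]
  congr 1
  have hcongr : ∀ c ∈ Finset.range m, fibPoly ((if c < r then j + 1 else j) + 1)
      = if c < r then fibPoly (j + 2) else fibPoly (j + 1) := by
    intro c _
    split <;> rfl
  rw [Finset.prod_congr rfl hcongr, Finset.prod_ite]
  have hf1 : (Finset.range m).filter (fun c => c < r) = Finset.range r := by
    ext c
    simp only [Finset.mem_filter, Finset.mem_range]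
    omega
  have hf2 : (((Finset.range m).filter (fun c => ¬ c < r))).card = m - r := by
    have := Finset.card_filter_add_card_filter_not
      (s := Finset.range m) (fun c => c < r)
    rw [hf1] at this
    simp only [Finset.card_range] at this
    omega
  rw [Finset.prod_const, Finset.prod_const, hf1, Finset.card_range, hf2, mul_comm]
end

section
/- For all integers m ≥ 1, j ≥ 0, and 0 ≤ r ≤ m−1, the total number of subsets of {1,…,mj+r} (of any size) in which no two elements differ by exactly m equals F_{j+2}^{m−r} · F_{j+3}^{r}, where F_n is the n-th Fibonacci number. -/
open Finset

/-- Independent sets in the path `{0, …, k-1}`. -/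
def indepSets (k : ℕ) : Finset (Finset ℕ) :=
  (Finset.range k).powerset.filter (fun T => ∀ a ∈ T, a + 1 ∉ T)

lemma indepSets_card (k : ℕ) : (indepSets k).card = Nat.fib (k + 2) := by
  induction k using Nat.strong_induction_on with
  | _ k ih =>
    match k with
    | 0 =>
      have h0 : indepSets 0 = {∅} := by
        ext S
        simp only [indepSets, Finset.range_zero, Finset.powerset_empty, Finset.mem_filter,
          Finset.mem_singleton]
        constructor
        · rintro ⟨h, -⟩; exact h
        · rintro rfl; simp
      rw [h0, Finset.card_singleton]; rfl
    | 1 =>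
      have h1 : indepSets 1 = {∅, {0}} := by
        ext S
        simp only [indepSets, Finset.mem_filter, Finset.mem_powerset, Finset.mem_insert,
          Finset.mem_singleton, Finset.range_one]
        constructor
        · rintro ⟨hsub, -⟩
          rw [Finset.subset_singleton_iff] at hsub
          exact hsub
        · rintro (rfl | rfl) <;> simp
      rw [h1, Finset.card_insert_of_notMem (by
        simp only [Finset.mem_singleton]
        exact fun h => Finset.singleton_ne_empty 0 h.symm), Finset.card_singleton]
      rfl
    | (k + 2) =>
      have h1 := ih (k + 1) (by omega)
      have h2 := ih k (by omega)
      have hsplit := Finset.card_filter_add_card_filter_not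
        (s := indepSets (k + 2)) (fun S => (k + 1) ∈ S)
      have hA : Finset.filter (fun S => ¬ (k + 1) ∈ S) (indepSets (k + 2))
          = indepSets (k + 1) := by
        ext S
        simp only [indepSets, Finset.mem_filter, Finset.mem_powerset]
        constructor
        · rintro ⟨⟨hsub, hind⟩, hk⟩
          refine ⟨fun x hx => ?_, hind⟩
          have hx2 := hsub hx
          rw [Finset.mem_range] at hx2 ⊢
          have : x ≠ k + 1 := fun h => hk (h ▸ hx)
          omega
        · rintro ⟨hsub, hind⟩
          have hk : (k + 1) ∉ S := fun h => by
            have := hsub h; rw [Finset.mem_range] at this; omega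
          exact ⟨⟨hsub.trans (Finset.range_subset_range.mpr (by omega)), hind⟩, hk⟩
      have hB : (Finset.filter (fun S => (k + 1) ∈ S) (indepSets (k + 2))).card
          = (indepSets k).card := by
        refine Finset.card_bij' (fun S _ => S.erase (k + 1))
          (fun T _ => insert (k + 1) T) ?_ ?_ ?_ ?_
        · intro S hS
          simp only [Finset.mem_filter, indepSets, Finset.mem_powerset] at hS
          obtain ⟨⟨hsub, hind⟩, hmem⟩ := hS
          have hknot : k ∉ S := fun h => hind k h hmem
          simp only [indepSets, Finset.mem_filter, Finset.mem_powerset]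
          constructor
          · intro x hx
            rw [Finset.mem_erase] at hx
            have hx2 := hsub hx.2
            rw [Finset.mem_range] at hx2 ⊢
            have : x ≠ k := fun h => hknot (h ▸ hx.2)
            have := hx.1
            omega
          · intro a ha h
            rw [Finset.mem_erase] at ha h
            exact hind a ha.2 h.2
        · intro T hT
          simp only [indepSets, Finset.mem_filter, Finset.mem_powerset] at hT
          obtain ⟨hsub, hind⟩ := hT
          simp only [Finset.mem_filter, indepSets, Finset.mem_powerset]
          refine ⟨⟨?_, ?_⟩, Finset.mem_insert_self _ _⟩
          · intro x hx
            rw [Finset.mem_insert] at hx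
            rcases hx with rfl | hx
            · rw [Finset.mem_range]; omega
            · have := hsub hx; rw [Finset.mem_range] at this ⊢; omega
          · intro a ha h
            rw [Finset.mem_insert] at ha h
            rcases ha with rfl | ha
            · rcases h with h | h
              · omega
              · have := hsub h; rw [Finset.mem_range] at this; omega
            · rcases h with h | h
              · have := hsub ha; rw [Finset.mem_range] at this; omega
              · exact hind a ha h
        · intro S hS
          simp only [Finset.mem_filter] at hS
          exact Finset.insert_erase hS.2
        · intro T hT
          simp only [indepSets, Finset.mem_filter, Finset.mem_powerset] at hT
          apply Finset.erase_insert
          intro h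
          have := hT.1 h; rw [Finset.mem_range] at this; omega
      rw [hA] at hsplit
      have hf : Nat.fib (k + 2 + 2) = Nat.fib (k + 2) + Nat.fib (k + 1 + 2) := by
        have := Nat.fib_add_two (n := k + 2)
        rw [show k + 2 + 1 = k + 1 + 2 by omega] at this
        exact this
      omega

lemma uniq_rep {m i i' a b : ℕ} (hi : i < m) (hi' : i' < m)
    (h : m * a + i = m * b + i') : a = b ∧ i = i' := by
  have h1 : (m * a + i) % m = i := by
    rw [Nat.mul_add_mod]; exact Nat.mod_eq_of_lt hi
  have h2 : (m * b + i') % m = i' := by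
    rw [Nat.mul_add_mod]; exact Nat.mod_eq_of_lt hi'
  have hii : i = i' := by rw [← h1, ← h2, h]
  subst hii
  have : m * a = m * b := by omega
  exact ⟨Nat.eq_of_mul_eq_mul_left (by omega) this, rfl⟩

lemma card_filter_eq_prod (m n : ℕ) (hm : 1 ≤ m) (len : ℕ → ℕ)
    (hlen : ∀ i < m, ∀ q, m * q + i + 1 ≤ n ↔ q < len i) :
    ((Finset.Icc 1 n).powerset.filter (fun S => ∀ a ∈ S, a + m ∉ S)).card
      = ∏ i ∈ Finset.range m, (indepSets (len i)).card := by
  rw [← Finset.card_pi]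
  apply Finset.card_bij'
    (i := fun S _ => fun i _ =>
      (S.filter (fun x => (x - 1) % m = i)).image (fun x => (x - 1) / m))
    (j := fun t _ => (Finset.range m).attach.biUnion
      (fun i => (t i.1 i.2).image (fun q => m * q + i.1 + 1)))
  · -- hi : image of forward map lands in the pi set
    intro S hS
    simp only [Finset.mem_filter, Finset.mem_powerset] at hS
    obtain ⟨hSsub, hSind⟩ := hS
    rw [Finset.mem_pi]
    intro i hi
    rw [Finset.mem_range] at hi
    simp only [indepSets, Finset.mem_filter, Finset.mem_powerset]
    constructor
    · intro q hq
      simp only [Finset.mem_image, Finset.mem_filter] at hq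
      obtain ⟨x, ⟨hxS, hxmod⟩, hxdiv⟩ := hq
      have hx := hSsub hxS
      rw [Finset.mem_Icc] at hx
      subst hxdiv; subst hxmod
      have hrep : m * ((x - 1) / m) + (x - 1) % m = x - 1 := Nat.div_add_mod _ _
      rw [Finset.mem_range, ← (hlen ((x - 1) % m) hi ((x - 1) / m))]
      omega
    · intro q hq hq1
      simp only [Finset.mem_image, Finset.mem_filter] at hq hq1
      obtain ⟨x, ⟨hxS, hxmod⟩, hxdiv⟩ := hq
      obtain ⟨y, ⟨hyS, hymod⟩, hydiv⟩ := hq1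
      have hx := hSsub hxS; have hy := hSsub hyS
      rw [Finset.mem_Icc] at hx hy
      have hrx : m * ((x - 1) / m) + (x - 1) % m = x - 1 := Nat.div_add_mod _ _
      have hry : m * ((y - 1) / m) + (y - 1) % m = y - 1 := Nat.div_add_mod _ _
      have hyx : y = x + m := by
        have e1 : m * ((x - 1) / m) = m * q := by rw [hxdiv]
        have e2 : m * ((y - 1) / m) = m * (q + 1) := by rw [hydiv]
        have e3 : m * (q + 1) = m * q + m := by ring
        omega
      exact hSind x hxS (hyx ▸ hyS)
  · -- hj : backward map lands in the filtered powerset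
    intro t ht
    rw [Finset.mem_pi] at ht
    simp only [Finset.mem_filter, Finset.mem_powerset]
    constructor
    · intro x hx
      simp only [Finset.mem_biUnion, Finset.mem_attach, Finset.mem_image, true_and,
        Subtype.exists] at hx
      obtain ⟨i, hi, q, hq, rfl⟩ := hx
      have hi' := hi; rw [Finset.mem_range] at hi'
      have hti := ht i hi
      simp only [indepSets, Finset.mem_filter, Finset.mem_powerset] at hti
      have : q ∈ Finset.range (len i) := hti.1 hq
      rw [Finset.mem_range] at this
      rw [Finset.mem_Icc]
      exact ⟨by omega, (hlen i hi' q).2 this⟩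
    · intro a ha hma
      simp only [Finset.mem_biUnion, Finset.mem_attach, Finset.mem_image, true_and,
        Subtype.exists] at ha hma
      obtain ⟨i, hi, q, hq, rfl⟩ := ha
      obtain ⟨i', hi', q', hq', heq⟩ := hma
      rw [Finset.mem_range] at hi hi'
      have : m * (q + 1) + i = m * q' + i' := by ring_nf; ring_nf at heq; omega
      obtain ⟨hqe, hie⟩ := uniq_rep hi hi' this
      subst hie
      have hti := ht i (Finset.mem_range.mpr hi)
      simp only [indepSets, Finset.mem_filter] at hti
      exact hti.2 q hq (hqe ▸ hq')
  · -- left inverse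
    intro S hS
    simp only [Finset.mem_filter, Finset.mem_powerset] at hS
    obtain ⟨hSsub, _⟩ := hS
    ext x
    simp only [Finset.mem_biUnion, Finset.mem_attach, Finset.mem_image, Finset.mem_filter,
      true_and, Subtype.exists]
    constructor
    · rintro ⟨i, hi, q, ⟨y, ⟨hyS, hymod⟩, hydiv⟩, rfl⟩
      subst hydiv; subst hymod
      have hy := hSsub hyS; rw [Finset.mem_Icc] at hy
      have hry : m * ((y - 1) / m) + (y - 1) % m = y - 1 := Nat.div_add_mod _ _
      have : y = m * ((y - 1) / m) + (y - 1) % m + 1 := by omega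
      rwa [← this]
    · intro hxS
      have hx := hSsub hxS; rw [Finset.mem_Icc] at hx
      have hrx : m * ((x - 1) / m) + (x - 1) % m = x - 1 := Nat.div_add_mod _ _
      have him : (x - 1) % m < m := Nat.mod_lt _ (by omega)
      refine ⟨(x - 1) % m, Finset.mem_range.mpr him, (x - 1) / m,
        ⟨x, ⟨hxS, rfl⟩, rfl⟩, by omega⟩
  · -- right inverse
    intro t ht
    funext i hi
    have hi' := hi; rw [Finset.mem_range] at hi'
    ext q
    simp only [Finset.mem_image, Finset.mem_filter, Finset.mem_biUnion, Finset.mem_attach,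
      true_and, Subtype.exists]
    constructor
    · rintro ⟨x, ⟨⟨i', hmi', q', hq', rfl⟩, hxmod⟩, hxdiv⟩
      rw [Finset.mem_range] at hmi'
      have h1 : (m * q' + i' + 1 - 1) = m * q' + i' := by omega
      rw [h1] at hxmod hxdiv
      have h2 : (m * q' + i') % m = i' := by
        rw [Nat.mul_add_mod]; exact Nat.mod_eq_of_lt hmi'
      have h3 : (m * q' + i') / m = q' := by
        rw [Nat.mul_add_div (by omega)]
        simp [Nat.div_eq_of_lt hmi']
      rw [h2] at hxmod; rw [h3] at hxdiv
      subst hxmod; subst hxdiv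
      exact hq'
    · intro hq
      exact ⟨m * q + i + 1, ⟨⟨i, hi, q, hq, rfl⟩, by
        have : m * q + i + 1 - 1 = m * q + i := by omega
        rw [this, Nat.mul_add_mod]; exact Nat.mod_eq_of_lt hi'⟩, by
        have : m * q + i + 1 - 1 = m * q + i := by omega
        rw [this, Nat.mul_add_div (by omega)]
        simp [Nat.div_eq_of_lt hi']⟩

/-- The number of subsets of `{1, …, mj + r}` (of any size) in which no two
elements differ by exactly `m` is `F_{j+2}^(m-r) * F_{j+3}^r`. -/
theorem stmt_10 (m j r : ℕ) (hm : 1 ≤ m) (hr : r ≤ m - 1) :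
    (((Finset.Icc 1 (m * j + r)).powerset.filter
        (fun S => ∀ a ∈ S, a + m ∉ S)).card)
      = Nat.fib (j + 2) ^ (m - r) * Nat.fib (j + 3) ^ r := by
  have hrm : r < m := by omega
  rw [card_filter_eq_prod m (m * j + r) hm (fun i => if i < r then j + 1 else j)]
  · have : ∀ i ∈ Finset.range m,
        (indepSets (if i < r then j + 1 else j)).card
          = (if i < r then Nat.fib (j + 3) else Nat.fib (j + 2)) := by
      intro i _
      split <;> rw [indepSets_card]
    rw [Finset.prod_congr rfl this, Finset.prod_ite, Finset.prod_const, Finset.prod_const]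
    have h1 : Finset.filter (fun i => i < r) (Finset.range m) = Finset.range r := by
      ext i; simp only [Finset.mem_filter, Finset.mem_range]; omega
    have h2 : (Finset.filter (fun i => ¬ i < r) (Finset.range m)).card = m - r := by
      have := Finset.card_filter_add_card_filter_not
        (s := Finset.range m) (fun i => i < r)
      rw [h1] at this
      simp only [Finset.card_range] at this
      omega
    rw [h1, h2, Finset.card_range]
    ring
  · intro i hi q
    constructor
    · intro h
      by_contra hq
      push_neg at hq
      split at hq
      · have : j + 1 ≤ q := hq
        have h2 : m * (j + 1) ≤ m * q := Nat.mul_le_mul_left m this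
        have h3 : m * (j + 1) = m * j + m := by ring
        omega
      · have : j ≤ q := hq
        have : m * j ≤ m * q := Nat.mul_le_mul_left m this
        omega
    · intro hq
      split at hq
      · have : q ≤ j := by omega
        have : m * q ≤ m * j := Nat.mul_le_mul_left m this
        omega
      · have : q + 1 ≤ j := by omega
        have h2 : m * (q + 1) ≤ m * j := Nat.mul_le_mul_left m this
        have : m * (q + 1) = m * q + m := by ring
        omega
end

section
/- For all integers m ≥ 1, j ≥ 0, 0 ≤ r ≤ m−1, and k ≥ 0, the number of k-element subsets of {1,…,mj+r} in which no two elements differ by exactly m equals the sum, over all m-tuples (k_1,…,k_m) of nonnegative integers with k_1+⋯+k_m = k, of the products ∏_{i=1}^{r} C(j+2−k_i, k_i) · ∏_{i=r+1}^{m} C(j+1−k_i, k_i), where C(a,b) is the binomial coefficient and subtraction is truncated at 0. (This expresses the paper's bijection between tilings of a board by squares and (1,m−1)-fences and tilings of an m-tuple of shorter boards by squares and dominoes.) -/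
open Finset

def AvoidsDiff (d : ℕ) (S : Finset ℕ) : Prop := ∀ a ∈ S, a + d ∉ S

instance (d : ℕ) : DecidablePred (AvoidsDiff d) :=
  fun S => inferInstanceAs (Decidable (∀ a ∈ S, a + d ∉ S))

lemma avoidsDiff_map_addRightEmbedding {d c : ℕ} {S : Finset ℕ} :
    AvoidsDiff d (S.map (addRightEmbedding c)) ↔ AvoidsDiff d S := by
  simp [AvoidsDiff, add_right_comm _ c d]

lemma Cm_eq_card_powersetCard_range (m N k : ℕ) :
    Cm m N k = #{S ∈ powersetCard k (range N) | AvoidsDiff m S} := by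
  have hIcc : Icc 1 N = (range N).map (addRightEmbedding 1) := by
    ext x
    simp only [mem_Icc, mem_map, mem_range, addRightEmbedding_apply]
    exact ⟨fun h => ⟨x - 1, by omega, by omega⟩, by rintro ⟨a, ha, rfl⟩; omega⟩
  rw [Cm, hIcc, powersetCard_map, filter_map, card_map]
  exact congrArg card (filter_congr fun S _ => avoidsDiff_map_addRightEmbedding)

lemma card_avoidsDiff_one_succ_succ (ℓ κ : ℕ) :
    #{T ∈ powersetCard (κ + 1) (range (ℓ + 2)) | AvoidsDiff 1 T}
      = #{T ∈ powersetCard (κ + 1) (range (ℓ + 1)) | AvoidsDiff 1 T}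
        + #{T ∈ powersetCard κ (range ℓ) | AvoidsDiff 1 T} := by
  rw [← card_filter_add_card_filter_not (p := fun T => ℓ + 1 ∈ T), add_comm, filter_filter,
    filter_filter]
  congr 1
  · congr 1
    ext T
    simp only [mem_filter, mem_powersetCard]
    simp only [subset_iff, mem_range, AvoidsDiff]
    grind
  · symm
    -- a set containing `ℓ + 1` avoids `ℓ`, so removing `ℓ + 1` leaves a subset of `range ℓ`
    refine card_bij' (fun T _ => insert (ℓ + 1) T) (fun T _ => T.erase (ℓ + 1)) ?_ ?_ ?_ ?_ <;>
      intro T hT <;> simp only [mem_filter, mem_powersetCard] at hT ⊢ <;>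
      simp only [subset_iff, mem_range, AvoidsDiff] at hT ⊢ <;> grind

lemma card_avoidsDiff_one : ∀ ℓ κ : ℕ,
    #{T ∈ powersetCard κ (range ℓ) | AvoidsDiff 1 T} = (ℓ + 1 - κ).choose κ
  | _, 0 => by rw [powersetCard_zero, filter_singleton, if_pos (by simp [AvoidsDiff])]; rfl
  | 0, _ + 1 => by simp
  | 1, 1 => by decide
  | 1, _ + 2 => by simp
  | ℓ + 2, κ + 1 => by
    rw [card_avoidsDiff_one_succ_succ, card_avoidsDiff_one, card_avoidsDiff_one]
    rcases le_or_gt κ (ℓ + 1) with h | h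
    · rw [show ℓ + 2 + 1 - (κ + 1) = ℓ + 1 - κ + 1 by omega, Nat.choose_succ_succ',
        show ℓ + 1 + 1 - (κ + 1) = ℓ + 1 - κ by omega, add_comm]
    · rw [Nat.choose_eq_zero_of_lt (by omega), Nat.choose_eq_zero_of_lt (by omega),
        Nat.choose_eq_zero_of_lt (by omega)]

lemma card_filter_piFinset_sum_eq {α : Type*} [DecidableEq α] {n : ℕ} (s : Fin n → Finset α)
    (w : α → ℕ) (k : ℕ) :
    #{f ∈ Fintype.piFinset s | ∑ i, w (f i) = k}
      = ∑ t ∈ Nat.antidiagonalTuple n k, ∏ i, #{a ∈ s i | w a = t i} := by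
  rw [card_eq_sum_card_fiberwise (f := fun (f : Fin n → α) i => w (f i))
    (t := Nat.antidiagonalTuple n k)
    (fun f hf => Nat.mem_antidiagonalTuple.2 (mem_filter.1 hf).2)]
  refine sum_congr rfl fun t ht => ?_
  rw [← Fintype.card_piFinset]
  congr 1
  ext f
  simp only [mem_filter, Fintype.mem_piFinset, funext_iff]
  grind [Nat.mem_antidiagonalTuple]

lemma mul_add_injective {m : ℕ} (i : Fin m) : Function.Injective (fun q => m * q + i) :=
  (add_left_injective _).comp (mul_right_injective₀ i.pos.ne')

lemma mul_add_inj {m : ℕ} {i i' : Fin m} {q q' : ℕ} :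
    m * q + i = m * q' + i' ↔ i = i' ∧ q = q' := by
  refine ⟨fun h => ?_, by rintro ⟨rfl, rfl⟩; rfl⟩
  obtain ⟨hq, hi⟩ := (Nat.div_mod_unique i.pos).2 ⟨(add_comm _ _).trans h, i.isLt⟩
  rw [Nat.mul_add_div i'.pos, Nat.div_eq_of_lt i'.isLt, add_zero] at hq
  rw [Nat.mul_add_mod, Nat.mod_eq_of_lt i'.isLt] at hi
  exact ⟨Fin.ext hi.symm, hq.symm⟩

def residueClassLength (j r i : ℕ) : ℕ := if i < r then j + 1 else j

lemma mul_add_lt_mul_add_iff {m j r q i : ℕ} (hi : i < m) (hr : r ≤ m) :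
    m * q + i < m * j + r ↔ q < residueClassLength j r i := by
  unfold residueClassLength
  split_ifs <;> constructor <;> intro h <;> by_contra! h' <;> nlinarith

section Interleave

variable {m : ℕ}

noncomputable def residues (m : ℕ) (S : Finset ℕ) (i : Fin m) : Finset ℕ :=
  S.preimage (fun q => m * q + i) (mul_add_injective i).injOn

def interleave (m : ℕ) (f : Fin m → Finset ℕ) : Finset ℕ :=
  univ.biUnion fun i => (f i).map ⟨fun q => m * q + i, mul_add_injective i⟩

@[simp] lemma mem_residues {S : Finset ℕ} {i : Fin m} {q : ℕ} :
    q ∈ residues m S i ↔ m * q + i ∈ S :=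
  mem_preimage

lemma mem_interleave {f : Fin m → Finset ℕ} {x : ℕ} :
    x ∈ interleave m f ↔ ∃ i, ∃ q ∈ f i, m * q + i = x := by
  simp [interleave]

@[simp] lemma mul_add_mem_interleave {f : Fin m → Finset ℕ} {i : Fin m} {q : ℕ} :
    m * q + i ∈ interleave m f ↔ q ∈ f i := by
  simp [mem_interleave, mul_add_inj]

lemma residues_interleave (f : Fin m → Finset ℕ) : residues m (interleave m f) = f := by
  ext i q
  simp

lemma interleave_residues (hm : 0 < m) (S : Finset ℕ) : interleave m (residues m S) = S := by
  ext x
  simp only [mem_interleave, mem_residues]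
  refine ⟨by rintro ⟨i, q, hq, rfl⟩; exact hq, fun hx => ?_⟩
  exact ⟨⟨x % m, Nat.mod_lt x hm⟩, x / m, by rwa [Nat.div_add_mod], Nat.div_add_mod x m⟩

lemma card_interleave (f : Fin m → Finset ℕ) : #(interleave m f) = ∑ i, #(f i) := by
  rw [interleave, card_biUnion]
  · simp
  · intro i _ i' _ hii'
    simp only [disjoint_left, mem_map, Function.Embedding.coeFn_mk]
    rintro _ ⟨q, -, rfl⟩ ⟨q', -, h⟩
    exact hii' (mul_add_inj.1 h).1.symm

lemma avoidsDiff_interleave_iff {f : Fin m → Finset ℕ} :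
    AvoidsDiff m (interleave m f) ↔ ∀ i, AvoidsDiff 1 (f i) := by
  have shift (i : Fin m) (q : ℕ) : m * q + i + m = m * (q + 1) + i := by ring
  constructor
  · intro h i q hq hq1
    exact h _ (mul_add_mem_interleave.2 hq) (by rw [shift, mul_add_mem_interleave]; exact hq1)
  · intro h x hx
    obtain ⟨i, q, hq, rfl⟩ := mem_interleave.1 hx
    rw [shift, mul_add_mem_interleave]
    exact h i q hq

lemma interleave_subset_range_iff {j r : ℕ} (hr : r ≤ m) {f : Fin m → Finset ℕ} :
    interleave m f ⊆ range (m * j + r) ↔ ∀ i, f i ⊆ range (residueClassLength j r i) := by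
  constructor
  · intro h i q hq
    rw [mem_range, ← mul_add_lt_mul_add_iff i.isLt hr]
    exact mem_range.1 (h (mul_add_mem_interleave.2 hq))
  · intro h x hx
    obtain ⟨i, q, hq, rfl⟩ := mem_interleave.1 hx
    rw [mem_range, mul_add_lt_mul_add_iff i.isLt hr]
    exact mem_range.1 (h i hq)

lemma card_avoidsDiff_eq_card_piFinset (hm : 0 < m) {j r : ℕ} (hr : r ≤ m) (k : ℕ) :
    #{S ∈ powersetCard k (range (m * j + r)) | AvoidsDiff m S}
      = #{f ∈ Fintype.piFinset fun i : Fin m =>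
            {T ∈ (range (residueClassLength j r i)).powerset | AvoidsDiff 1 T} |
          ∑ i, #(f i) = k} := by
  have key (f : Fin m → Finset ℕ) :
      interleave m f ∈ {S ∈ powersetCard k (range (m * j + r)) | AvoidsDiff m S}
        ↔ f ∈ {f ∈ Fintype.piFinset fun i : Fin m =>
            {T ∈ (range (residueClassLength j r i)).powerset | AvoidsDiff 1 T} |
          ∑ i, #(f i) = k} := by
    simp only [mem_filter, mem_powersetCard, Fintype.mem_piFinset, mem_powerset,
      interleave_subset_range_iff hr, avoidsDiff_interleave_iff, card_interleave, forall_and]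
    tauto
  refine card_nbij' (residues m) (interleave m) (fun S hS => ?_) (fun f hf => (key f).2 hf)
    (fun S _ => interleave_residues hm S) (fun f _ => residues_interleave f)
  rw [mem_coe, ← key, interleave_residues hm]
  exact hS

end Interleave

/-- The number of `k`-subsets of `{1, …, mj + r}` with no two elements differing
by exactly `m`, as a sum over `m`-tuples `(k₁, …, k_m)` summing to `k` of products
of the domino-tiling counts `C(j+2-kᵢ, kᵢ)` (first `r` boards) and
`C(j+1-kᵢ, kᵢ)` (remaining `m - r` boards). -/
theorem stmt_11 (m j r k : ℕ) (hm : 1 ≤ m) (hr : r ≤ m - 1) :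
    Cm m (m * j + r) k
      = ∑ t ∈ Finset.Nat.antidiagonalTuple m k,
          ∏ i : Fin m,
            if (i : ℕ) < r then Nat.choose (j + 2 - t i) (t i)
            else Nat.choose (j + 1 - t i) (t i) := by
  rw [Cm_eq_card_powersetCard_range, card_avoidsDiff_eq_card_piFinset hm (by omega),
    card_filter_piFinset_sum_eq]
  refine sum_congr rfl fun t _ => prod_congr rfl fun i _ => ?_
  rw [filter_comm, ← powersetCard_eq_filter, card_avoidsDiff_one, residueClassLength]
  split_ifs <;> rfl
end

section
/- For all integers m ≥ 1, j ≥ 1, and 0 ≤ p ≤ m, the number of (mj−p)-element subsets of {1,…,m(2j−1)−p} in which no two elements differ by exactly m equals j^p; that is, C_m(m(2j−1)−p, mj−p) = j^p. Equivalently, the n-tile tiling triangle entry ⟨mj, mj−p⟩_m equals j^p. -/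
open Finset

/-- Count of `k`-subsets of `A` with no two elements differing by `m`. -/
def cv (m : ℕ) (A : Finset ℕ) (k : ℕ) : ℕ :=
  ((A.powersetCard k).filter (fun S => ∀ a ∈ S, a + m ∉ S)).card

lemma cv_zero (m : ℕ) (A : Finset ℕ) : cv m A 0 = 1 := by
  unfold cv
  rw [Finset.powersetCard_zero, Finset.filter_singleton]
  simp

lemma cv_of_card_lt {m k : ℕ} {A : Finset ℕ} (h : A.card < k) : cv m A k = 0 := by
  unfold cv
  rw [Finset.powersetCard_eq_empty.mpr h]
  simp

lemma bound1 {n : ℕ} {S : Finset ℕ} (hS : S ⊆ Finset.Icc 1 n)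
    (hv : ∀ a ∈ S, a + 1 ∉ S) : 2 * S.card ≤ n + 1 := by
  have hdisj : Disjoint S (S.image (· + 1)) := by
    rw [Finset.disjoint_left]
    intro x hx hx'
    obtain ⟨a, ha, rfl⟩ := Finset.mem_image.mp hx'
    exact hv a ha hx
  have hsub : S ∪ S.image (· + 1) ⊆ Finset.Icc 1 (n + 1) := by
    intro x hx
    rcases Finset.mem_union.mp hx with h | h
    · have := Finset.mem_Icc.mp (hS h); exact Finset.mem_Icc.mpr ⟨this.1, by omega⟩
    · obtain ⟨a, ha, rfl⟩ := Finset.mem_image.mp h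
      have := Finset.mem_Icc.mp (hS ha); exact Finset.mem_Icc.mpr ⟨by omega, by omega⟩
  have hcard : (S ∪ S.image (· + 1)).card = 2 * S.card := by
    rw [Finset.card_union_of_disjoint hdisj,
      Finset.card_image_of_injective _ (add_left_injective 1)]
    ring
  have := Finset.card_le_card hsub
  rw [hcard, Nat.card_Icc] at this
  omega



lemma cv1_rec (n k : ℕ) (hn : 2 ≤ n) (hk : 1 ≤ k) :
    cv 1 (Finset.Icc 1 n) k
      = cv 1 (Finset.Icc 1 (n-1)) k + cv 1 (Finset.Icc 1 (n-2)) (k-1) := by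
  classical
  unfold cv
  set F := ((Finset.Icc 1 n).powersetCard k).filter (fun S => ∀ a ∈ S, a + 1 ∉ S) with hF
  have hsplit := Finset.card_filter_add_card_filter_not
    (s := F) (p := fun S => n ∈ S)
  have h1 : F.filter (fun S => ¬ n ∈ S)
      = ((Finset.Icc 1 (n-1)).powersetCard k).filter (fun S => ∀ a ∈ S, a + 1 ∉ S) := by
    ext S
    simp only [hF, Finset.mem_filter, Finset.mem_powersetCard, Finset.mem_Icc]
    constructor
    · rintro ⟨⟨⟨hsub, hcard⟩, hval⟩, hnot⟩
      refine ⟨⟨fun a ha => ?_, hcard⟩, hval⟩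
      have := Finset.mem_Icc.mp (hsub ha)
      have hne : a ≠ n := fun h => hnot (h ▸ ha)
      exact Finset.mem_Icc.mpr ⟨this.1, by omega⟩
    · rintro ⟨⟨hsub, hcard⟩, hval⟩
      have hnot : n ∉ S := fun h => by
        have := Finset.mem_Icc.mp (hsub h); omega
      refine ⟨⟨⟨fun a ha => ?_, hcard⟩, hval⟩, hnot⟩
      have := Finset.mem_Icc.mp (hsub ha)
      exact Finset.mem_Icc.mpr ⟨this.1, by omega⟩
  have h2 : (F.filter (fun S => n ∈ S)).card
      = (((Finset.Icc 1 (n-2)).powersetCard (k-1)).filter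
          (fun S => ∀ a ∈ S, a + 1 ∉ S)).card := by
    apply Finset.card_bij (fun S _ => S.erase n)
    · rintro S hS
      simp only [hF, Finset.mem_filter, Finset.mem_powersetCard] at hS
      obtain ⟨⟨⟨hsub, hcard⟩, hval⟩, hmem⟩ := hS
      simp only [Finset.mem_filter, Finset.mem_powersetCard]
      refine ⟨⟨fun a ha => ?_, ?_⟩, fun a ha => fun h => ?_⟩
      · rw [Finset.mem_erase] at ha
        have hb := Finset.mem_Icc.mp (hsub ha.2)
        have hne1 : a ≠ n - 1 := by
          intro h
          have hh : a + 1 = n := by omega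
          exact hval a ha.2 (hh ▸ hmem)
        exact Finset.mem_Icc.mpr ⟨hb.1, by omega⟩
      · rw [Finset.card_erase_of_mem hmem, hcard]
      · rw [Finset.mem_erase] at ha h
        exact hval a ha.2 h.2
    · rintro S hS S' hS' h
      simp only [hF, Finset.mem_filter] at hS hS'
      rw [← Finset.insert_erase hS.2, ← Finset.insert_erase hS'.2, h]
    · rintro T hT
      simp only [Finset.mem_filter, Finset.mem_powersetCard] at hT
      obtain ⟨⟨hsub, hcard⟩, hval⟩ := hT
      have hTn : n ∉ T := fun h => by have := Finset.mem_Icc.mp (hsub h); omega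
      refine ⟨insert n T, ?_, ?_⟩
      · simp only [hF, Finset.mem_filter, Finset.mem_powersetCard]
        refine ⟨⟨⟨fun a ha => ?_, ?_⟩, fun a ha h => ?_⟩, Finset.mem_insert_self _ _⟩
        · rcases Finset.mem_insert.mp ha with rfl | ha
          · exact Finset.mem_Icc.mpr ⟨by omega, le_rfl⟩
          · have := Finset.mem_Icc.mp (hsub ha); exact Finset.mem_Icc.mpr ⟨this.1, by omega⟩
        · rw [Finset.card_insert_of_notMem hTn, hcard]; omega
        · rcases Finset.mem_insert.mp ha with rfl | ha
          · rcases Finset.mem_insert.mp h with h | h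
            · omega
            · have := Finset.mem_Icc.mp (hsub h); omega
          · rcases Finset.mem_insert.mp h with h | h
            · have := Finset.mem_Icc.mp (hsub ha); omega
            · exact hval a ha h
      · rw [Finset.erase_insert hTn]
  rw [← hsplit, h2, h1]
  omega

lemma cv1 (n k : ℕ) : cv 1 (Finset.Icc 1 n) k = (n + 1 - k).choose k := by
  induction n using Nat.strong_induction_on generalizing k with
  | _ n ih =>
    match k with
    | 0 =>
      have h0 : cv 1 (Finset.Icc 1 n) 0 = 1 := by
        unfold cv; rw [Finset.powersetCard_zero, Finset.filter_singleton]; simp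
      simp [h0]
    | k + 1 =>
      match n with
      | 0 =>
        have h0 : cv 1 (Finset.Icc 1 0) (k+1) = 0 := by
          unfold cv
          rw [Finset.powersetCard_eq_empty.mpr (by simp)]
          simp
        rw [h0, Nat.choose_eq_zero_of_lt (by omega)]
      | 1 =>
        match k with
        | 0 =>
          have h1 : cv 1 (Finset.Icc 1 1) 1 = 1 := by
            unfold cv
            simp [Finset.Icc_self, Finset.powersetCard_one, Finset.filter_singleton]
          rw [h1]; rfl
        | k + 1 =>
          have h0 : cv 1 (Finset.Icc 1 1) (k+2) = 0 := by
            unfold cv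
            rw [Finset.powersetCard_eq_empty.mpr (by simp)]
            simp
          rw [h0, Nat.choose_eq_zero_of_lt (by omega)]
      | n + 2 =>
        rw [cv1_rec (n+2) (k+1) (by omega) (by omega)]
        have e1 : n + 2 - 1 = n + 1 := by omega
        have e2 : n + 2 - 2 = n := by omega
        have e3 : k + 1 - 1 = k := by omega
        rw [e1, e2, e3, ih (n+1) (by omega), ih n (by omega)]
        rcases Nat.lt_or_ge (n + 1) (k + 1) with h | h
        · rw [Nat.choose_eq_zero_of_lt (by omega), Nat.choose_eq_zero_of_lt (by omega),
            Nat.choose_eq_zero_of_lt (by omega)]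
        · have e4 : n + 2 + 1 - (k+1) = (n + 1 - k) + 1 := by omega
          have e5 : n + 1 + 1 - (k+1) = n + 1 - k := by omega
          rw [e4, e5, Nat.choose_succ_succ]
          ring



section transfer
variable {mS mT : ℕ} {A : Finset ℕ} {f : ℕ → ℕ}

lemma valid_image (hinj : Set.InjOn f A)
    (hstep : ∀ a ∈ A, ∀ b ∈ A, f b = f a + mT ↔ b = a + mS)
    {S : Finset ℕ} (hS : S ⊆ A) (hval : ∀ a ∈ S, a + mS ∉ S) :
    ∀ y ∈ S.image f, y + mT ∉ S.image f := by
  intro y hy hy'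
  obtain ⟨a, ha, rfl⟩ := Finset.mem_image.mp hy
  obtain ⟨b, hb, hfb⟩ := Finset.mem_image.mp hy'
  have := (hstep a (hS ha) b (hS hb)).mp hfb
  exact hval a ha (this ▸ hb)

lemma pullback (hinj : Set.InjOn f A)
    (hstep : ∀ a ∈ A, ∀ b ∈ A, f b = f a + mT ↔ b = a + mS)
    {T : Finset ℕ} (hT : T ⊆ A.image f) (hval : ∀ y ∈ T, y + mT ∉ T) :
    ∃ S, S ⊆ A ∧ S.image f = T ∧ (∀ a ∈ S, a + mS ∉ S) := by
  classical
  refine ⟨A.filter (fun a => f a ∈ T), Finset.filter_subset _ _, ?_, ?_⟩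
  · ext y
    simp only [Finset.mem_image, Finset.mem_filter]
    constructor
    · rintro ⟨a, ⟨_, h⟩, rfl⟩; exact h
    · intro hy
      obtain ⟨a, ha, rfl⟩ := Finset.mem_image.mp (hT hy)
      exact ⟨a, ⟨ha, hy⟩, rfl⟩
  · intro a ha h
    simp only [Finset.mem_filter] at ha h
    have hfa : f (a + mS) = f a + mT := (hstep a ha.1 (a + mS) h.1).mpr rfl
    exact hval (f a) ha.2 (hfa ▸ h.2)

lemma pullback' (hinj : Set.InjOn f A)
    (hstep : ∀ a ∈ A, ∀ b ∈ A, f b = f a + mT ↔ b = a + mS)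
    {T : Finset ℕ} (hT : T ⊆ A.image f) (hval : ∀ y ∈ T, y + mT ∉ T) :
    ∃ S, S ⊆ A ∧ S.image f = T ∧ S.card = T.card ∧ (∀ a ∈ S, a + mS ∉ S) := by
  obtain ⟨S, hSA, him, hv⟩ := pullback hinj hstep hT hval
  exact ⟨S, hSA, him, by rw [← him, Finset.card_image_of_injOn (hinj.mono (by exact_mod_cast hSA))], hv⟩

lemma cv_image (k : ℕ) (hinj : Set.InjOn f A)
    (hstep : ∀ a ∈ A, ∀ b ∈ A, f b = f a + mT ↔ b = a + mS) :
    cv mT (A.image f) k = cv mS A k := by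
  classical
  unfold cv
  symm
  apply Finset.card_bij (fun S _ => S.image f)
  · intro S hS
    simp only [Finset.mem_filter, Finset.mem_powersetCard] at hS ⊢
    obtain ⟨⟨hsub, hcard⟩, hval⟩ := hS
    refine ⟨⟨Finset.image_subset_image hsub, ?_⟩, valid_image hinj hstep hsub hval⟩
    rw [Finset.card_image_of_injOn (hinj.mono (by exact_mod_cast hsub))]
    exact hcard
  · intro S hS S' hS' h
    simp only [Finset.mem_filter, Finset.mem_powersetCard] at hS hS'
    ext x
    constructor
    · intro hx
      have : f x ∈ S'.image f := h ▸ Finset.mem_image_of_mem f hx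
      obtain ⟨y, hy, hxy⟩ := Finset.mem_image.mp this
      have := hinj (hS'.1.1 hy) (hS.1.1 hx) hxy
      exact this ▸ hy
    · intro hx
      have : f x ∈ S.image f := h ▸ Finset.mem_image_of_mem f hx
      obtain ⟨y, hy, hxy⟩ := Finset.mem_image.mp this
      have := hinj (hS.1.1 hy) (hS'.1.1 hx) hxy
      exact this ▸ hy
  · intro T hT
    simp only [Finset.mem_filter, Finset.mem_powersetCard] at hT
    obtain ⟨⟨hsub, hcard⟩, hval⟩ := hT
    obtain ⟨S, hSA, him, hc, hv⟩ := pullback' hinj hstep hsub hval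
    refine ⟨S, ?_, him⟩
    simp only [Finset.mem_filter, Finset.mem_powersetCard]
    exact ⟨⟨hSA, by omega⟩, hv⟩

end transfer



/-- the residue-`r` chain of length `ℓ` : `{r, m+r, …, m(ℓ-1)+r}`. -/
def chain (m r ℓ : ℕ) : Finset ℕ := (Finset.Icc 1 ℓ).image (fun i => m * (i - 1) + r)

section chainlem
variable {m r ℓ : ℕ}

lemma chain_injOn (hm : 1 ≤ m) :
    Set.InjOn (fun i => m * (i - 1) + r) (Finset.Icc 1 ℓ) := by
  intro x hx y hy h
  simp only [Finset.coe_Icc, Set.mem_Icc] at hx hy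
  simp only [add_left_inj] at h
  have := Nat.eq_of_mul_eq_mul_left (by omega : 0 < m) h
  omega

lemma chain_step (hm : 1 ≤ m) :
    ∀ a ∈ Finset.Icc 1 ℓ, ∀ b ∈ Finset.Icc 1 ℓ,
      (fun i => m * (i - 1) + r) b = (fun i => m * (i - 1) + r) a + m ↔ b = a + 1 := by
  intro a ha b hb
  simp only [Finset.mem_Icc] at ha hb
  obtain ⟨a, rfl⟩ : ∃ a', a = a' + 1 := ⟨a - 1, by omega⟩
  obtain ⟨b, rfl⟩ : ∃ b', b = b' + 1 := ⟨b - 1, by omega⟩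
  simp only [Nat.add_sub_cancel]
  constructor
  · intro h
    have h' : m * b = m * (a + 1) := by rw [Nat.mul_succ]; omega
    have := Nat.eq_of_mul_eq_mul_left (by omega : 0 < m) h'
    omega
  · rintro h
    have : b = a + 1 := by omega
    subst this
    rw [Nat.mul_succ]
    omega

lemma cv_chain (hm : 1 ≤ m) (k : ℕ) :
    cv m (chain m r ℓ) k = (ℓ + 1 - k).choose k := by
  rw [chain, cv_image k (chain_injOn hm) (chain_step hm), cv1]

lemma chain_mod (hm : 1 ≤ m) (hr : 1 ≤ r) (hrm : r ≤ m) {x : ℕ}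
    (hx : x ∈ chain m r ℓ) : 1 ≤ x ∧ (x - 1) % m = r - 1 := by
  simp only [chain, Finset.mem_image, Finset.mem_Icc] at hx
  obtain ⟨i, hi, rfl⟩ := hx
  constructor
  · have := Nat.le_add_left r (m * (i - 1)); omega
  · rw [Nat.add_sub_assoc hr, Nat.mul_add_mod, Nat.mod_eq_of_lt (by omega)]

lemma chain_bound (hm : 1 ≤ m) {T : Finset ℕ} (hT : T ⊆ chain m r ℓ)
    (hval : ∀ a ∈ T, a + m ∉ T) : 2 * T.card ≤ ℓ + 1 := by
  obtain ⟨S, hSA, him, hc, hv⟩ := pullback' (chain_injOn hm) (chain_step hm) hT hval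
  rw [← hc]
  exact bound1 hSA hv

end chainlem

section split

lemma valid_subset {m : ℕ} {S T : Finset ℕ} (h : T ⊆ S) (hv : ∀ a ∈ S, a + m ∉ S) :
    ∀ a ∈ T, a + m ∉ T := fun a ha h' => hv a (h ha) (h h')

lemma bound_union {m cA cB : ℕ} {A B T : Finset ℕ} (hT : T ⊆ A ∪ B)
    (hval : ∀ a ∈ T, a + m ∉ T)
    (hbA : ∀ T' ⊆ A, (∀ a ∈ T', a + m ∉ T') → T'.card ≤ cA)
    (hbB : ∀ T' ⊆ B, (∀ a ∈ T', a + m ∉ T') → T'.card ≤ cB) :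
    T.card ≤ cA + cB := by
  classical
  have hTeq : T = (T ∩ A) ∪ (T ∩ B) := by
    rw [← Finset.inter_union_distrib_left, Finset.inter_eq_left.mpr hT]
  calc T.card = ((T ∩ A) ∪ (T ∩ B)).card := by rw [← hTeq]
    _ ≤ (T ∩ A).card + (T ∩ B).card := Finset.card_union_le _ _
    _ ≤ cA + cB := by
        have h1 := hbA (T ∩ A) (Finset.inter_subset_right) (valid_subset Finset.inter_subset_left hval)
        have h2 := hbB (T ∩ B) (Finset.inter_subset_right) (valid_subset Finset.inter_subset_left hval)
        omega

lemma cv_split {m : ℕ} {A B : Finset ℕ} {cA cB : ℕ}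
    (hdis : Disjoint A B)
    (hAB : ∀ a ∈ A, a + m ∉ B) (hBA : ∀ b ∈ B, b + m ∉ A)
    (hbA : ∀ T ⊆ A, (∀ a ∈ T, a + m ∉ T) → T.card ≤ cA)
    (hbB : ∀ T ⊆ B, (∀ a ∈ T, a + m ∉ T) → T.card ≤ cB) :
    cv m (A ∪ B) (cA + cB) = cv m A cA * cv m B cB := by
  classical
  unfold cv
  rw [← Finset.card_product]
  apply Finset.card_bij (fun S (_ : S ∈ _) => (S ∩ A, S ∩ B))
  · intro S hS
    simp only [Finset.mem_filter, Finset.mem_powersetCard] at hS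
    obtain ⟨⟨hsub, hcard⟩, hval⟩ := hS
    have hvalA : ∀ a ∈ S ∩ A, a + m ∉ S ∩ A := valid_subset Finset.inter_subset_left hval
    have hvalB : ∀ a ∈ S ∩ B, a + m ∉ S ∩ B := valid_subset Finset.inter_subset_left hval
    have hSeq : (S ∩ A) ∪ (S ∩ B) = S := by
      rw [← Finset.inter_union_distrib_left, Finset.inter_eq_left.mpr hsub]
    have hdisj : Disjoint (S ∩ A) (S ∩ B) :=
      Finset.disjoint_of_subset_left Finset.inter_subset_right
        (Finset.disjoint_of_subset_right Finset.inter_subset_right hdis)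
    have hsum : (S ∩ A).card + (S ∩ B).card = cA + cB := by
      rw [← Finset.card_union_of_disjoint hdisj, hSeq, hcard]
    have h1 := hbA (S ∩ A) Finset.inter_subset_right hvalA
    have h2 := hbB (S ∩ B) Finset.inter_subset_right hvalB
    simp only [Finset.mem_product, Finset.mem_filter, Finset.mem_powersetCard]
    exact ⟨⟨⟨Finset.inter_subset_right, by omega⟩, hvalA⟩,
      ⟨⟨Finset.inter_subset_right, by omega⟩, hvalB⟩⟩
  · intro S hS S' hS' h
    simp only [Finset.mem_filter, Finset.mem_powersetCard] at hS hS'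
    have e := congrArg Prod.fst h
    have e' := congrArg Prod.snd h
    simp only at e e'
    have hSeq : (S ∩ A) ∪ (S ∩ B) = S := by
      rw [← Finset.inter_union_distrib_left, Finset.inter_eq_left.mpr hS.1.1]
    have hSeq' : (S' ∩ A) ∪ (S' ∩ B) = S' := by
      rw [← Finset.inter_union_distrib_left, Finset.inter_eq_left.mpr hS'.1.1]
    rw [← hSeq, ← hSeq', e, e']
  · rintro ⟨T₁, T₂⟩ hT
    simp only [Finset.mem_product, Finset.mem_filter, Finset.mem_powersetCard] at hT
    obtain ⟨⟨⟨hsub₁, hcard₁⟩, hval₁⟩, ⟨hsub₂, hcard₂⟩, hval₂⟩ := hT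
    have hd : Disjoint T₁ T₂ :=
      Finset.disjoint_of_subset_left hsub₁ (Finset.disjoint_of_subset_right hsub₂ hdis)
    refine ⟨T₁ ∪ T₂, ?_, ?_⟩
    · simp only [Finset.mem_filter, Finset.mem_powersetCard]
      refine ⟨⟨Finset.union_subset_union hsub₁ hsub₂, ?_⟩, ?_⟩
      · rw [Finset.card_union_of_disjoint hd, hcard₁, hcard₂]
      · intro a ha h'
        rcases Finset.mem_union.mp ha with ha | ha <;>
          rcases Finset.mem_union.mp h' with h' | h'
        · exact hval₁ a ha h'
        · exact hAB a (hsub₁ ha) (hsub₂ h')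
        · exact hBA a (hsub₂ ha) (hsub₁ h')
        · exact hval₂ a ha h'
    · have hT₂A : T₂ ∩ A = ∅ := Finset.disjoint_iff_inter_eq_empty.mp
        (Finset.disjoint_of_subset_left hsub₂ hdis.symm)
      have hT₁B : T₁ ∩ B = ∅ := Finset.disjoint_iff_inter_eq_empty.mp
        (Finset.disjoint_of_subset_left hsub₁ hdis)
      have e₁ : (T₁ ∪ T₂) ∩ A = T₁ := by
        rw [Finset.union_inter_distrib_right, Finset.inter_eq_left.mpr hsub₁, hT₂A,
          Finset.union_empty]
      have e₂ : (T₁ ∪ T₂) ∩ B = T₂ := by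
        rw [Finset.union_inter_distrib_right, Finset.inter_eq_left.mpr hsub₂, hT₁B,
          Finset.empty_union]
      rw [e₁, e₂]

end split


section biunion

lemma bound_biUnion {m : ℕ} {ch : ℕ → Finset ℕ} {c : ℕ → ℕ} (R : Finset ℕ)
    (hb : ∀ r ∈ R, ∀ T ⊆ ch r, (∀ a ∈ T, a + m ∉ T) → T.card ≤ c r) :
    ∀ T ⊆ R.biUnion ch, (∀ a ∈ T, a + m ∉ T) → T.card ≤ ∑ r ∈ R, c r := by
  classical
  induction R using Finset.induction_on with
  | empty =>
    intro T hT _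
    rw [Finset.biUnion_empty] at hT
    simp [Finset.subset_empty.mp hT]
  | @insert r R hr ih =>
    intro T hT hval
    rw [Finset.biUnion_insert] at hT
    rw [Finset.sum_insert hr]
    exact bound_union hT hval (hb r (Finset.mem_insert_self _ _))
      (ih (fun r' hr' => hb r' (Finset.mem_insert_of_mem hr')))

lemma cv_biUnion {m : ℕ} {ch : ℕ → Finset ℕ} {c v : ℕ → ℕ} (R : Finset ℕ)
    (hcross : ∀ r ∈ R, ∀ r₂ ∈ R, r ≠ r₂ → ∀ a ∈ ch r, a ∉ ch r₂ ∧ a + m ∉ ch r₂)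
    (hb : ∀ r ∈ R, ∀ T ⊆ ch r, (∀ a ∈ T, a + m ∉ T) → T.card ≤ c r)
    (hcount : ∀ r ∈ R, cv m (ch r) (c r) = v r) :
    cv m (R.biUnion ch) (∑ r ∈ R, c r) = ∏ r ∈ R, v r := by
  classical
  induction R using Finset.induction_on with
  | empty =>
    rw [Finset.biUnion_empty, Finset.sum_empty, Finset.prod_empty, cv_zero]
  | @insert r R hr ih =>
    rw [Finset.biUnion_insert, Finset.sum_insert hr, Finset.prod_insert hr]
    have hmem : r ∈ insert r R := Finset.mem_insert_self _ _
    have hdis : Disjoint (ch r) (R.biUnion ch) := by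
      rw [Finset.disjoint_biUnion_right]
      intro r₂ hr₂
      rw [Finset.disjoint_left]
      intro a ha
      exact (hcross r hmem r₂ (Finset.mem_insert_of_mem hr₂)
        (by rintro rfl; exact hr hr₂) a ha).1
    have hAB : ∀ a ∈ ch r, a + m ∉ R.biUnion ch := by
      intro a ha h
      obtain ⟨r₂, hr₂, h₂⟩ := Finset.mem_biUnion.mp h
      exact (hcross r hmem r₂ (Finset.mem_insert_of_mem hr₂)
        (by rintro rfl; exact hr hr₂) a ha).2 h₂
    have hBA : ∀ b ∈ R.biUnion ch, b + m ∉ ch r := by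
      intro b hb' h
      obtain ⟨r₂, hr₂, h₂⟩ := Finset.mem_biUnion.mp hb'
      exact (hcross r₂ (Finset.mem_insert_of_mem hr₂) r hmem
        (by rintro rfl; exact hr hr₂) b h₂).2 h
    rw [cv_split hdis hAB hBA (hb r hmem)
      (bound_biUnion R (fun r' hr' => hb r' (Finset.mem_insert_of_mem hr')))]
    rw [hcount r hmem,
      ih (fun r₁ h₁ r₂ h₂ => hcross r₁ (Finset.mem_insert_of_mem h₁) r₂ (Finset.mem_insert_of_mem h₂))
        (fun r' hr' => hb r' (Finset.mem_insert_of_mem hr'))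
        (fun r' hr' => hcount r' (Finset.mem_insert_of_mem hr'))]

end biunion


/-- `C_m(m(2j-1) - p, mj - p) = j^p` for `j ≥ 1` and `0 ≤ p ≤ m`. -/
theorem stmt_14 (m j p : ℕ) (hm : 1 ≤ m) (hj : 1 ≤ j) (hp : p ≤ m) :
    Cm m (m * (2 * j - 1) - p) (m * j - p) = j ^ p := by
  classical
  have hchange : Cm m (m * (2 * j - 1) - p) (m * j - p)
      = cv m (Finset.Icc 1 (m * (2 * j - 1) - p)) (m * j - p) := rfl
  rw [hchange]
  set ℓ : ℕ → ℕ := fun r => if r ≤ m - p then 2*j-1 else 2*j-2 with hℓ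
  set c : ℕ → ℕ := fun r => if r ≤ m - p then j else j-1 with hc
  set v : ℕ → ℕ := fun r => if r ≤ m - p then 1 else j with hv
  have f1 : m * (2*j-2) + m = m * (2*j-1) := by
    have e : 2*j-1 = (2*j-2) + 1 := by omega
    rw [e, Nat.mul_succ]
  have f3 : m * (j-1) + m = m * j := by
    have e : j = (j-1) + 1 := by omega
    conv_rhs => rw [e]
    rw [Nat.mul_succ]
  -- coverage
  have hcover : Finset.Icc 1 (m * (2 * j - 1) - p)
      = (Finset.Icc 1 m).biUnion (fun r => chain m r (ℓ r)) := by
    ext x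
    simp only [Finset.mem_biUnion, Finset.mem_Icc, chain, Finset.mem_image]
    constructor
    · rintro ⟨hx1, hx2⟩
      obtain ⟨q, s, hs, hxe⟩ : ∃ q s, s < m ∧ m * q + s + 1 = x := by
        refine ⟨(x-1)/m, (x-1)%m, Nat.mod_lt _ (by omega), ?_⟩
        rw [Nat.div_add_mod]; omega
      refine ⟨s + 1, ⟨by omega, by omega⟩, q + 1, ⟨by omega, ?_⟩, ?_⟩
      · by_cases hcase : s + 1 ≤ m - p
        · simp only [hℓ, if_pos hcase]
          by_contra hcon
          have hmul : m * (2*j-1) ≤ m * q := Nat.mul_le_mul_left m (by omega)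
          set B := m * (2*j-1)
          set P := m * q
          omega
        · simp only [hℓ, if_neg hcase]
          by_contra hcon
          have hmul : m * (2*j-2) ≤ m * q := Nat.mul_le_mul_left m (by omega)
          set Y := m * (2*j-2)
          set B := m * (2*j-1)
          set P := m * q
          omega
      · rw [Nat.add_sub_cancel]
        set P := m * q
        omega
    · rintro ⟨r, ⟨hr1, hrm⟩, i, ⟨hi1, hi2⟩, rfl⟩
      constructor
      · have := Nat.le_add_left r (m * (i-1)); omega
      · by_cases hcase : r ≤ m - p
        · simp only [hℓ, if_pos hcase] at hi2
          have hmul : m * (i-1) ≤ m * (2*j-2) := Nat.mul_le_mul_left m (by omega)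
          set X := m * (i-1)
          set Y := m * (2*j-2)
          set B := m * (2*j-1)
          omega
        · simp only [hℓ, if_neg hcase] at hi2
          have hj2 : 2 ≤ j := by omega
          have f2 : m * (2*j-3) + m = m * (2*j-2) := by
            have e : 2*j-2 = (2*j-3) + 1 := by omega
            rw [e, Nat.mul_succ]
          have hmul : m * (i-1) ≤ m * (2*j-3) := Nat.mul_le_mul_left m (by omega)
          set X := m * (i-1)
          set Y2 := m * (2*j-3)
          set Y := m * (2*j-2)
          set B := m * (2*j-1)
          omega
  -- cardinalities of the filters
  have hfilter : (Finset.Icc 1 m).filter (fun r => r ≤ m - p) = Finset.Icc 1 (m-p) := by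
    ext r
    simp only [Finset.mem_filter, Finset.mem_Icc]
    omega
  have hfiltercard : ((Finset.Icc 1 m).filter (fun r => ¬ r ≤ m - p)).card = p := by
    have h := Finset.card_filter_add_card_filter_not
      (s := Finset.Icc 1 m) (p := fun r => r ≤ m - p)
    rw [hfilter] at h
    simp only [Nat.card_Icc] at h
    omega
  -- the subset size
  have hk : m * j - p = ∑ r ∈ Finset.Icc 1 m, c r := by
    have step : ∀ r ∈ Finset.Icc 1 m, c r = (j-1) + (if r ≤ m - p then 1 else 0) := by
      intro r _
      by_cases h : r ≤ m - p
      · simp only [hc, if_pos h]; omega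
      · simp only [hc, if_neg h]; omega
    rw [Finset.sum_congr rfl step, Finset.sum_add_distrib, Finset.sum_const,
      ← Finset.sum_filter, hfilter, Finset.sum_const, Nat.card_Icc, Nat.card_Icc,
      smul_eq_mul, smul_eq_mul, mul_one]
    have e : m + 1 - 1 = m := by omega
    have e2 : m - p + 1 - 1 = m - p := by omega
    rw [e, e2]
    set X := m * (j-1)
    set Y := m * j
    omega
  -- per-chain bounds
  have hbounds : ∀ r ∈ Finset.Icc 1 m, ∀ T ⊆ chain m r (ℓ r),
      (∀ a ∈ T, a + m ∉ T) → T.card ≤ c r := by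
    intro r _ T hT hval
    have hb := chain_bound hm hT hval
    by_cases h : r ≤ m - p
    · simp only [hℓ, if_pos h] at hb
      simp only [hc, if_pos h]
      omega
    · simp only [hℓ, if_neg h] at hb
      simp only [hc, if_neg h]
      omega
  -- per-chain counts
  have hcounts : ∀ r ∈ Finset.Icc 1 m, cv m (chain m r (ℓ r)) (c r) = v r := by
    intro r _
    rw [cv_chain hm]
    by_cases h : r ≤ m - p
    · simp only [hℓ, hc, hv, if_pos h]
      have e : 2*j-1 + 1 - j = j := by omega
      rw [e, Nat.choose_self]
    · simp only [hℓ, hc, hv, if_neg h]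
      have e : 2*j-2 + 1 - (j-1) = j := by omega
      rw [e]
      have e2 : j - (j - 1) = 1 := by omega
      rw [← Nat.choose_symm (by omega : j - 1 ≤ j), e2, Nat.choose_one_right]
  -- cross-chain independence
  have hcross : ∀ r ∈ Finset.Icc 1 m, ∀ r₂ ∈ Finset.Icc 1 m, r ≠ r₂ →
      ∀ a ∈ chain m r (ℓ r), a ∉ chain m r₂ (ℓ r₂) ∧ a + m ∉ chain m r₂ (ℓ r₂) := by
    intro r hr r₂ hr₂ hne a ha
    rw [Finset.mem_Icc] at hr hr₂
    obtain ⟨ha1, ha2⟩ := chain_mod hm hr.1 hr.2 ha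
    constructor
    · intro h
      obtain ⟨_, h2⟩ := chain_mod hm hr₂.1 hr₂.2 h
      omega
    · intro h
      obtain ⟨_, h2⟩ := chain_mod hm hr₂.1 hr₂.2 h
      have e : a + m - 1 = (a - 1) + m := by omega
      rw [e, Nat.add_mod_right] at h2
      omega
  -- the product
  have hprod : ∏ r ∈ Finset.Icc 1 m, v r = j ^ p := by
    simp only [hv]
    rw [Finset.prod_ite]
    simp only [Finset.prod_const_one, Finset.prod_const, one_mul]
    rw [hfiltercard]
  rw [hcover, hk, cv_biUnion (Finset.Icc 1 m) hcross hbounds hcounts, hprod]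
end

section
/- For all integers m ≥ 1 and j ≥ 1, the number of (mj−1)-element subsets of {1,…,m(2j−1)} in which no two elements differ by exactly m equals m·T_j, where T_j = j(j+1)/2 is the j-th triangular number; that is, C_m(m(2j−1), mj−1) = m·j(j+1)/2. Equivalently, the n-tile tiling triangle entry ⟨mj+1, mj−1⟩_m equals m·T_j. -/
open Finset

section PathCount


open Finset

def pathSet (L k : ℕ) : Finset (Finset ℕ) :=
  ((Finset.range L).powersetCard k).filter (fun T => ∀ t ∈ T, t + 1 ∉ T)

lemma mem_pathSet {L k : ℕ} {T : Finset ℕ} :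
    T ∈ pathSet L k ↔ (T ⊆ Finset.range L ∧ T.card = k) ∧ ∀ t ∈ T, t + 1 ∉ T := by
  simp [pathSet, Finset.mem_powersetCard]

lemma pathSet_zero (L : ℕ) : (pathSet L 0).card = 1 := by
  simp [pathSet, Finset.powersetCard_zero, Finset.filter_singleton]

lemma pathSet_rec (L k : ℕ) :
    (pathSet (L+2) (k+1)).card = (pathSet (L+1) (k+1)).card + (pathSet L k).card := by
  classical
  rw [← Finset.card_filter_add_card_filter_not (s := pathSet (L+2) (k+1))
      (fun T => (L+1) ∈ T)]
  rw [add_comm]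
  congr 1
  · -- not containing L+1 : equals pathSet (L+1) (k+1)
    congr 1
    ext T
    simp only [Finset.mem_filter, mem_pathSet]
    constructor
    · rintro ⟨⟨⟨hsub, hcard⟩, hind⟩, hnot⟩
      refine ⟨⟨?_, hcard⟩, hind⟩
      intro t ht
      have := hsub ht
      simp only [Finset.mem_range] at this ⊢
      rcases Nat.lt_or_ge t (L+1) with h | h
      · exact h
      · exfalso; apply hnot; have : t = L + 1 := by omega
        rwa [this] at ht
    · rintro ⟨⟨hsub, hcard⟩, hind⟩
      refine ⟨⟨⟨fun t ht => ?_, hcard⟩, hind⟩, fun hmem => ?_⟩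
      · have := hsub ht; simp only [Finset.mem_range] at this ⊢; omega
      · have := hsub hmem; simp at this
  · -- containing L+1 : bijection with pathSet L k via erase/insert
    refine Finset.card_bij' (fun T _ => T.erase (L+1)) (fun T _ => insert (L+1) T) ?_ ?_ ?_ ?_
    · rintro T hT
      simp only [Finset.mem_filter, mem_pathSet] at hT
      obtain ⟨⟨⟨hsub, hcard⟩, hind⟩, hmem⟩ := hT
      rw [mem_pathSet]
      have hLnot : L ∉ T := by
        intro hL
        exact hind L hL hmem
      refine ⟨⟨?_, ?_⟩, ?_⟩
      · intro t ht
        have ht' := Finset.mem_of_mem_erase ht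
        have hne := Finset.ne_of_mem_erase ht
        have := hsub ht'
        simp only [Finset.mem_range] at this ⊢
        rcases Nat.lt_or_ge t L with h | h
        · exact h
        · exfalso
          have : t = L ∨ t = L + 1 := by omega
          rcases this with rfl | rfl
          · exact hLnot ht'
          · exact hne rfl
      · rw [Finset.card_erase_of_mem hmem, hcard]; omega
      · intro t ht
        intro h
        exact hind t (Finset.mem_of_mem_erase ht) (Finset.mem_of_mem_erase h)
    · rintro T hT
      rw [mem_pathSet] at hT
      obtain ⟨⟨hsub, hcard⟩, hind⟩ := hT
      have hLmem : L + 1 ∉ T := by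
        intro h; have := hsub h; simp at this
      simp only [Finset.mem_filter, mem_pathSet]
      refine ⟨⟨⟨?_, ?_⟩, ?_⟩, by simp⟩
      · intro t ht
        rcases Finset.mem_insert.mp ht with rfl | h
        · simp
        · have := hsub h; simp only [Finset.mem_range] at this ⊢; omega
      · rw [Finset.card_insert_of_notMem hLmem, hcard]
      · intro t ht h
        rcases Finset.mem_insert.mp ht with rfl | ht'
        · rcases Finset.mem_insert.mp h with h' | h'
          · omega
          · have := hsub h'; simp only [Finset.mem_range] at this; omega
        · rcases Finset.mem_insert.mp h with h' | h'
          · have := hsub ht'; simp only [Finset.mem_range] at this; omega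
          · exact hind t ht' h'
    · intro T hT
      simp only [Finset.mem_filter] at hT
      exact Finset.insert_erase hT.2
    · intro T hT
      rw [mem_pathSet] at hT
      have : L + 1 ∉ T := by
        intro h; have := hT.1.1 h; simp at this
      exact Finset.erase_insert this

lemma pathSet_card (L k : ℕ) : (pathSet L k).card = (L + 1 - k).choose k := by
  induction L using Nat.strong_induction_on generalizing k with
  | _ L ih =>
    match L, k with
    | 0, 0 => simp [pathSet_zero]
    | 0, (k+1) =>
      have : pathSet 0 (k+1) = ∅ := by
        unfold pathSet
        rw [Finset.powersetCard_eq_empty.mpr (by simp)]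
        simp
      simp [this]
    | 1, 0 => simp [pathSet_zero]
    | 1, 1 => decide
    | 1, (k+2) =>
      have : pathSet 1 (k+2) = ∅ := by
        unfold pathSet
        rw [Finset.powersetCard_eq_empty.mpr (by simp)]
        simp
      have h2 : (1 + 1 - (k+2)) = 0 := by omega
      simp [this, h2]
    | (L+2), 0 => simp [pathSet_zero]
    | (L+2), (k+1) =>
      rw [pathSet_rec, ih (L+1) (by omega), ih L (by omega)]
      rcases Nat.lt_or_ge k (L+2) with h | h
      · have h1 : L + 2 + 1 - (k+1) = (L + 1 - k) + 1 := by omega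
        have h2 : L + 1 + 1 - (k+1) = L + 1 - k := by omega
        rw [h1, h2, Nat.choose_succ_succ, Nat.add_comm]
      · have e1 : (L + 2 + 1 - (k+1)).choose (k+1) = 0 := Nat.choose_eq_zero_of_lt (by omega)
        have e2 : (L + 1 + 1 - (k+1)).choose (k+1) = 0 := Nat.choose_eq_zero_of_lt (by omega)
        have e3 : (L + 1 - k).choose k = 0 := Nat.choose_eq_zero_of_lt (by omega)
        rw [e1, e2, e3]
def evens (j : ℕ) : Finset ℕ := (Finset.range j).image (fun t => 2 * t)

lemma evens_card (j : ℕ) : (evens j).card = j := by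
  rw [evens, Finset.card_image_of_injective _ (fun a b h => by omega), Finset.card_range]

lemma evens_mem_pathSet (j : ℕ) (hj : 1 ≤ j) : evens j ∈ pathSet (2*j-1) j := by
  rw [mem_pathSet]
  refine ⟨⟨?_, evens_card j⟩, ?_⟩
  · intro t ht
    simp only [evens, Finset.mem_image, Finset.mem_range] at ht
    obtain ⟨u, hu, rfl⟩ := ht
    simp only [Finset.mem_range]; omega
  · intro t ht h
    simp only [evens, Finset.mem_image, Finset.mem_range] at ht h
    obtain ⟨u, hu, rfl⟩ := ht
    obtain ⟨v, hv, hveq⟩ := h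
    omega

lemma pathSet_bound {L k : ℕ} {T : Finset ℕ} (hT : T ∈ pathSet L k) : 2 * k ≤ L + 1 := by
  have h1 : (pathSet L k).card ≠ 0 := by
    intro h
    rw [Finset.card_eq_zero] at h
    rw [h] at hT; simp at hT
  rw [pathSet_card] at h1
  have := Nat.choose_eq_zero_of_lt (n := L + 1 - k) (k := k)
  by_contra hc
  exact h1 (this (by omega))

lemma pathSet_max_unique {j : ℕ} (hj : 1 ≤ j) {T : Finset ℕ}
    (hT : T ∈ pathSet (2*j-1) j) : T = evens j := by
  have hcard : (pathSet (2*j-1) j).card = 1 := by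
    rw [pathSet_card]
    have : 2*j - 1 + 1 - j = j := by omega
    rw [this, Nat.choose_self]
  obtain ⟨a, ha⟩ := Finset.card_eq_one.mp hcard
  rw [ha] at hT
  have := evens_mem_pathSet j hj
  rw [ha] at this
  simp only [Finset.mem_singleton] at hT this
  rw [hT, ← this]
def embedC (m r : ℕ) (T : Finset ℕ) : Finset ℕ := T.image (fun t => 1 + r + t * m)

lemma decodeC {m : ℕ} (hm : 1 ≤ m) {r r' t t' : ℕ} (hr : r < m) (hr' : r' < m)
    (h : 1 + r + t * m = 1 + r' + t' * m) : r = r' ∧ t = t' := by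
  have h' : r + t * m = r' + t' * m := by omega
  have e1 : (r + t * m) % m = r := by
    rw [Nat.add_mul_mod_self_right, Nat.mod_eq_of_lt hr]
  have e2 : (r' + t' * m) % m = r' := by
    rw [Nat.add_mul_mod_self_right, Nat.mod_eq_of_lt hr']
  have e3 : (r + t * m) / m = t := by
    rw [Nat.add_mul_div_right _ _ (by omega : 0 < m), Nat.div_eq_of_lt hr]; omega
  have e4 : (r' + t' * m) / m = t' := by
    rw [Nat.add_mul_div_right _ _ (by omega : 0 < m), Nat.div_eq_of_lt hr']; omega
  constructor
  · rw [← e1, ← e2, h']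
  · rw [← e3, ← e4, h']

lemma embedC_card {m : ℕ} (hm : 1 ≤ m) (r : ℕ) (T : Finset ℕ) :
    (embedC m r T).card = T.card := by
  rw [embedC, Finset.card_image_of_injective]
  intro a b h
  simp only at h
  have : a * m = b * m := by omega
  exact Nat.eq_of_mul_eq_mul_right (by omega) this

lemma embedC_disjoint {m : ℕ} (hm : 1 ≤ m) (U : ℕ → Finset ℕ) :
    ∀ r ∈ Finset.range m, ∀ r' ∈ Finset.range m, r ≠ r' →
      Disjoint (embedC m r (U r)) (embedC m r' (U r')) := by
  intro r hr r' hr' hne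
  simp only [Finset.mem_range] at hr hr'
  rw [Finset.disjoint_left]
  intro a ha ha'
  simp only [embedC, Finset.mem_image] at ha ha'
  obtain ⟨t, _, rfl⟩ := ha
  obtain ⟨t', _, heq⟩ := ha'
  exact hne ((decodeC hm hr' hr heq).1.symm)

def idxSetC (m j : ℕ) (S : Finset ℕ) (r : ℕ) : Finset ℕ :=
  (Finset.range (2*j-1)).filter (fun t => 1 + r + t * m ∈ S)

def goodOf (m j c : ℕ) (T : Finset ℕ) : Finset ℕ :=
  (Finset.range m).biUnion (fun r => embedC m r (if r = c then T else evens j))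

def deficC (m j : ℕ) (S : Finset ℕ) : Finset ℕ :=
  (Finset.range m).filter (fun r => (idxSetC m j S r).card ≠ j)

noncomputable def clsOf (m j : ℕ) (S : Finset ℕ) : ℕ :=
  if h : (deficC m j S).Nonempty then (deficC m j S).min' h else 0

section main
variable {m j : ℕ} (hm : 1 ≤ m) (hj : 1 ≤ j)

-- decomposition of elements of Icc 1 (m*(2j-1))
lemma decomp (hm : 1 ≤ m) (hj : 1 ≤ j) {a : ℕ} (ha : a ∈ Finset.Icc 1 (m * (2*j-1))) :
    ∃ r < m, ∃ t < 2*j-1, a = 1 + r + t * m := by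
  simp only [Finset.mem_Icc] at ha
  refine ⟨(a-1) % m, Nat.mod_lt _ (by omega), (a-1)/m, ?_, ?_⟩
  · rw [Nat.div_lt_iff_lt_mul (by omega)]
    calc a - 1 < m * (2*j-1) := by omega
    _ = (2*j-1) * m := by ring
  · have := Nat.mod_add_div' (a-1) m
    omega

lemma embed_mem_Icc (hm : 1 ≤ m) (hj : 1 ≤ j) {r t : ℕ} (hr : r < m) (ht : t < 2*j-1) :
    1 + r + t * m ∈ Finset.Icc 1 (m * (2*j-1)) := by
  simp only [Finset.mem_Icc]
  constructor
  · omega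
  · have h1 : t * m ≤ (2*j-2) * m := Nat.mul_le_mul_right m (by omega)
    have h2 : m * (2*j-1) = m + (2*j-2)*m := by
      obtain ⟨j', rfl⟩ : ∃ j', j = j' + 1 := ⟨j-1, by omega⟩
      have a1 : 2*(j'+1)-1 = 2*j'+1 := by omega
      have a2 : 2*(j'+1)-2 = 2*j' := by omega
      rw [a1, a2]; ring
    omega

-- key: idxSet of goodOf
lemma idxSet_goodOf (hm : 1 ≤ m) (hj : 1 ≤ j) {c : ℕ} (hc : c < m) {T : Finset ℕ}
    (hT : T ⊆ Finset.range (2*j-1)) {r : ℕ} (hr : r < m) :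
    idxSetC m j (goodOf m j c T) r = if r = c then T else evens j := by
  ext t
  simp only [idxSetC, Finset.mem_filter, Finset.mem_range, goodOf, Finset.mem_biUnion,
    embedC, Finset.mem_image]
  constructor
  · rintro ⟨ht, r', hr', t', ht', heq⟩
    obtain ⟨rfl, rfl⟩ := decodeC hm hr' hr heq
    exact ht'
  · intro ht
    have htlt : t < 2*j-1 := by
      by_cases h : r = c
      · rw [if_pos h] at ht
        exact Finset.mem_range.mp (hT ht)
      · rw [if_neg h] at ht
        simp only [evens, Finset.mem_image, Finset.mem_range] at ht
        obtain ⟨u, hu, rfl⟩ := ht; omega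
    exact ⟨htlt, r, hr, t, ht, rfl⟩

lemma goodOf_card (hm : 1 ≤ m) (hj : 1 ≤ j) {c : ℕ} (hc : c < m) {T : Finset ℕ}
    (hTcard : T.card = j - 1) :
    (goodOf m j c T).card = m * j - 1 := by
  rw [goodOf, Finset.card_biUnion]
  · have : ∀ r ∈ Finset.range m, (embedC m r (if r = c then T else evens j)).card
        = if r = c then j - 1 else j := by
      intro r _
      rw [embedC_card hm]
      by_cases h : r = c <;> simp [h, hTcard, evens_card]
    rw [Finset.sum_congr rfl this]
    rw [← Finset.add_sum_erase _ _ (Finset.mem_range.mpr hc), if_pos rfl]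
    have hrest : ∑ x ∈ (Finset.range m).erase c, (if x = c then j - 1 else j)
        = ((Finset.range m).erase c).card * j := by
      rw [Finset.sum_congr rfl (fun x hx => if_neg (Finset.ne_of_mem_erase hx))]
      simp [Finset.sum_const, Nat.smul_one_eq_cast]
    rw [hrest, Finset.card_erase_of_mem (Finset.mem_range.mpr hc), Finset.card_range]
    have h1 : (m-1)*j = m*j - j := Nat.sub_one_mul m j
    have h2 : j ≤ m*j := Nat.le_mul_of_pos_left j (by omega)
    omega
  · exact embedC_disjoint hm _

lemma evens_indep (j : ℕ) : ∀ t ∈ evens j, t + 1 ∉ evens j := by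
  intro t ht h
  simp only [evens, Finset.mem_image, Finset.mem_range] at ht h
  obtain ⟨u, hu, rfl⟩ := ht
  obtain ⟨v, hv, hveq⟩ := h
  omega

lemma goodOf_mem (hm : 1 ≤ m) (hj : 1 ≤ j) {c : ℕ} (hc : c < m) {T : Finset ℕ}
    (hT : T ∈ pathSet (2*j-1) (j-1)) :
    goodOf m j c T ∈ ((Finset.Icc 1 (m * (2*j-1))).powersetCard (m*j-1)).filter
      (fun S => ∀ a ∈ S, a + m ∉ S) := by
  rw [mem_pathSet] at hT
  obtain ⟨⟨hTsub, hTcard⟩, hTind⟩ := hT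
  simp only [Finset.mem_filter, Finset.mem_powersetCard]
  refine ⟨⟨?_, goodOf_card hm hj hc hTcard⟩, ?_⟩
  · intro a ha
    simp only [goodOf, Finset.mem_biUnion, embedC, Finset.mem_image, Finset.mem_range] at ha
    obtain ⟨r, hr, t, ht, rfl⟩ := ha
    have htlt : t < 2*j-1 := by
      by_cases h : r = c
      · rw [if_pos h] at ht; exact Finset.mem_range.mp (hTsub ht)
      · rw [if_neg h] at ht
        simp only [evens, Finset.mem_image, Finset.mem_range] at ht
        obtain ⟨u, hu, rfl⟩ := ht; omega
    exact embed_mem_Icc hm hj hr htlt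
  · intro a ha hma
    simp only [goodOf, Finset.mem_biUnion, embedC, Finset.mem_image, Finset.mem_range]
      at ha hma
    obtain ⟨r, hr, t, ht, rfl⟩ := ha
    obtain ⟨r', hr', t', ht', heq⟩ := hma
    have heq' : 1 + r' + t' * m = 1 + r + (t+1) * m := by
      rw [heq]; ring
    obtain ⟨h1, h2⟩ := decodeC hm hr' hr heq'
    rw [h1, h2] at ht'
    by_cases h : r = c
    · rw [if_pos h] at ht ht'
      exact hTind t ht ht'
    · rw [if_neg h] at ht ht'
      exact evens_indep j t ht ht'

-- S-side lemmas
variable {S : Finset ℕ}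

lemma idxSetC_mem_pathSet (hm : 1 ≤ m)
    (hS : S ∈ ((Finset.Icc 1 (m * (2*j-1))).powersetCard (m*j-1)).filter
      (fun S => ∀ a ∈ S, a + m ∉ S)) (r : ℕ) :
    idxSetC m j S r ∈ pathSet (2*j-1) (idxSetC m j S r).card := by
  simp only [Finset.mem_filter, Finset.mem_powersetCard] at hS
  rw [mem_pathSet]
  refine ⟨⟨Finset.filter_subset _ _, rfl⟩, ?_⟩
  intro t ht h
  simp only [idxSetC, Finset.mem_filter, Finset.mem_range] at ht h
  have : 1 + r + t * m + m ∈ S := by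
    have : 1 + r + (t+1) * m = 1 + r + t * m + m := by ring
    rw [← this]; exact h.2
  exact hS.2 _ ht.2 this

lemma S_decomp (hm : 1 ≤ m) (hj : 1 ≤ j)
    (hS : S ∈ ((Finset.Icc 1 (m * (2*j-1))).powersetCard (m*j-1)).filter
      (fun S => ∀ a ∈ S, a + m ∉ S)) :
    S = (Finset.range m).biUnion (fun r => embedC m r (idxSetC m j S r)) := by
  simp only [Finset.mem_filter, Finset.mem_powersetCard] at hS
  ext a
  simp only [Finset.mem_biUnion, embedC, Finset.mem_image, Finset.mem_range, idxSetC,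
    Finset.mem_filter]
  constructor
  · intro ha
    obtain ⟨r, hr, t, ht, rfl⟩ := decomp hm hj (hS.1.1 ha)
    exact ⟨r, hr, t, ⟨ht, ha⟩, rfl⟩
  · rintro ⟨r, hr, t, ⟨_, ha⟩, rfl⟩
    exact ha

lemma sum_idx_card (hm : 1 ≤ m) (hj : 1 ≤ j)
    (hS : S ∈ ((Finset.Icc 1 (m * (2*j-1))).powersetCard (m*j-1)).filter
      (fun S => ∀ a ∈ S, a + m ∉ S)) :
    ∑ r ∈ Finset.range m, (idxSetC m j S r).card = m * j - 1 := by
  have hcard : S.card = m*j-1 := by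
    simp only [Finset.mem_filter, Finset.mem_powersetCard] at hS
    exact hS.1.2
  calc ∑ r ∈ Finset.range m, (idxSetC m j S r).card
      = ∑ r ∈ Finset.range m, (embedC m r (idxSetC m j S r)).card :=
        Finset.sum_congr rfl (fun r _ => (embedC_card hm r _).symm)
    _ = ((Finset.range m).biUnion (fun r => embedC m r (idxSetC m j S r))).card :=
        (Finset.card_biUnion (embedC_disjoint hm _)).symm
    _ = S.card := by rw [← S_decomp hm hj hS]
    _ = m * j - 1 := hcard

lemma idx_card_le (hm : 1 ≤ m) (hj : 1 ≤ j)
    (hS : S ∈ ((Finset.Icc 1 (m * (2*j-1))).powersetCard (m*j-1)).filter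
      (fun S => ∀ a ∈ S, a + m ∉ S)) (r : ℕ) :
    (idxSetC m j S r).card ≤ j := by
  have := pathSet_bound (idxSetC_mem_pathSet hm hS r)
  omega

lemma defic_spec (hm : 1 ≤ m) (hj : 1 ≤ j)
    (hS : S ∈ ((Finset.Icc 1 (m * (2*j-1))).powersetCard (m*j-1)).filter
      (fun S => ∀ a ∈ S, a + m ∉ S)) :
    (deficC m j S).card = 1 ∧ ∀ r ∈ deficC m j S, (idxSetC m j S r).card = j - 1 := by
  have hle := idx_card_le hm hj hS
  have hsum := sum_idx_card hm hj hS
  have hsum2 : ∑ r ∈ Finset.range m, (j - (idxSetC m j S r).card) = 1 := by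
    have h1 : ∑ r ∈ Finset.range m, ((idxSetC m j S r).card + (j - (idxSetC m j S r).card))
        = ∑ r ∈ Finset.range m, j :=
      Finset.sum_congr rfl (fun r _ => by have := hle r; omega)
    rw [Finset.sum_add_distrib, Finset.sum_const, Finset.card_range, smul_eq_mul, hsum] at h1
    set A := ∑ r ∈ Finset.range m, (j - (idxSetC m j S r).card) with hA
    clear_value A
    have hmj : 1 ≤ m * j := Nat.one_le_iff_ne_zero.mpr (by positivity)
    omega
  have hD1 : ∑ r ∈ deficC m j S, (j - (idxSetC m j S r).card) = 1 := by
    rw [← Finset.sum_filter_add_sum_filter_not (Finset.range m)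
      (fun r => (idxSetC m j S r).card ≠ j) (fun r => j - (idxSetC m j S r).card)] at hsum2
    have hz : ∑ r ∈ (Finset.range m).filter (fun r => ¬ (idxSetC m j S r).card ≠ j),
        (j - (idxSetC m j S r).card) = 0 := by
      apply Finset.sum_eq_zero
      intro r hr
      simp only [Finset.mem_filter, not_not] at hr
      omega
    rw [hz, add_zero] at hsum2
    exact hsum2
  have hge : ∀ r ∈ deficC m j S, 1 ≤ j - (idxSetC m j S r).card := by
    intro r hr
    simp only [deficC, Finset.mem_filter] at hr
    have := hle r
    omega
  have hcardle : (deficC m j S).card ≤ 1 := by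
    have := Finset.card_nsmul_le_sum (deficC m j S)
      (fun r => j - (idxSetC m j S r).card) 1 hge
    simpa [hD1] using this
  have hne : (deficC m j S).card ≠ 0 := by
    intro h
    rw [Finset.card_eq_zero] at h
    rw [h] at hD1
    simp at hD1
  refine ⟨by omega, ?_⟩
  intro r hr
  have hsingle : deficC m j S = {r} := by
    apply Finset.eq_singleton_iff_unique_mem.mpr
    refine ⟨hr, fun x hx => ?_⟩
    by_contra hxr
    have : 2 ≤ (deficC m j S).card := Finset.one_lt_card.mpr ⟨x, hx, r, hr, hxr⟩
    omega
  rw [hsingle, Finset.sum_singleton] at hD1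
  have := hle r
  omega

lemma clsOf_mem (hm : 1 ≤ m) (hj : 1 ≤ j)
    (hS : S ∈ ((Finset.Icc 1 (m * (2*j-1))).powersetCard (m*j-1)).filter
      (fun S => ∀ a ∈ S, a + m ∉ S)) :
    clsOf m j S ∈ deficC m j S := by
  obtain ⟨h1, _⟩ := defic_spec hm hj hS
  have hne : (deficC m j S).Nonempty := Finset.card_pos.mp (by omega)
  rw [clsOf, dif_pos hne]
  exact Finset.min'_mem _ hne

lemma defic_eq_singleton (hm : 1 ≤ m) (hj : 1 ≤ j)
    (hS : S ∈ ((Finset.Icc 1 (m * (2*j-1))).powersetCard (m*j-1)).filter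
      (fun S => ∀ a ∈ S, a + m ∉ S)) :
    deficC m j S = {clsOf m j S} := by
  obtain ⟨h1, _⟩ := defic_spec hm hj hS
  apply Finset.eq_singleton_iff_unique_mem.mpr
  refine ⟨clsOf_mem hm hj hS, fun x hx => ?_⟩
  by_contra hxr
  have : 2 ≤ (deficC m j S).card :=
    Finset.one_lt_card.mpr ⟨x, hx, clsOf m j S, clsOf_mem hm hj hS, hxr⟩
  omega

lemma reconstruct (hm : 1 ≤ m) (hj : 1 ≤ j)
    (hS : S ∈ ((Finset.Icc 1 (m * (2*j-1))).powersetCard (m*j-1)).filter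
      (fun S => ∀ a ∈ S, a + m ∉ S)) :
    goodOf m j (clsOf m j S) (idxSetC m j S (clsOf m j S)) = S := by
  rw [goodOf]
  conv_rhs => rw [S_decomp hm hj hS]
  apply Finset.biUnion_congr rfl
  intro r hr
  by_cases h : r = clsOf m j S
  · rw [if_pos h, h]
  · rw [if_neg h]
    congr 1
    have hnotin : r ∉ deficC m j S := by
      rw [defic_eq_singleton hm hj hS]
      simpa using h
    have hcard : (idxSetC m j S r).card = j := by
      by_contra hc
      exact hnotin (Finset.mem_filter.mpr ⟨hr, hc⟩)
    have := idxSetC_mem_pathSet hm hS r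
    rw [hcard] at this
    exact (pathSet_max_unique hj this).symm

theorem main_count (hm : 1 ≤ m) (hj : 1 ≤ j) :
    (((Finset.Icc 1 (m * (2*j-1))).powersetCard (m*j-1)).filter
      (fun S => ∀ a ∈ S, a + m ∉ S)).card
    = ((Finset.range m) ×ˢ pathSet (2*j-1) (j-1)).card := by
  apply Finset.card_bij'
    (i := fun S _ => (clsOf m j S, idxSetC m j S (clsOf m j S)))
    (j := fun p _ => goodOf m j p.1 p.2)
  · intro S hS
    obtain ⟨_, h2⟩ := defic_spec hm hj hS
    have hmem := clsOf_mem hm hj hS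
    have hrange : clsOf m j S ∈ Finset.range m := (Finset.mem_filter.mp hmem).1
    rw [Finset.mem_product]
    refine ⟨hrange, ?_⟩
    have := idxSetC_mem_pathSet hm hS (clsOf m j S)
    rwa [h2 _ hmem] at this
  · rintro ⟨c, T⟩ hp
    rw [Finset.mem_product] at hp
    exact goodOf_mem hm hj (Finset.mem_range.mp hp.1) hp.2
  · intro S hS
    exact reconstruct hm hj hS
  · rintro ⟨c, T⟩ hp
    rw [Finset.mem_product] at hp
    obtain ⟨hc, hT⟩ := hp
    rw [Finset.mem_range] at hc
    have hTsub : T ⊆ Finset.range (2*j-1) := (mem_pathSet.mp hT).1.1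
    have hTcard : T.card = j - 1 := (mem_pathSet.mp hT).1.2
    have hidx : ∀ r < m, idxSetC m j (goodOf m j c T) r = if r = c then T else evens j :=
      fun r hr => idxSet_goodOf hm hj hc hTsub hr
    have hdef : deficC m j (goodOf m j c T) = {c} := by
      ext r
      simp only [deficC, Finset.mem_filter, Finset.mem_range, Finset.mem_singleton]
      constructor
      · rintro ⟨hr, hne⟩
        rw [hidx r hr] at hne
        by_contra hrc
        rw [if_neg hrc, evens_card] at hne
        exact hne rfl
      · rintro rfl
        refine ⟨hc, ?_⟩
        rw [hidx _ hc, if_pos rfl, hTcard]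
        omega
    have hne : (deficC m j (goodOf m j c T)).Nonempty := by
      rw [hdef]; exact Finset.singleton_nonempty c
    have hcls : clsOf m j (goodOf m j c T) = c := by
      rw [clsOf, dif_pos hne]
      apply le_antisymm
      · exact Finset.min'_le _ _ (by rw [hdef]; simp)
      · refine Finset.le_min' _ _ _ (fun y hy => ?_)
        rw [hdef] at hy
        simp only [Finset.mem_singleton] at hy
        omega
    rw [hcls, hidx c hc, if_pos rfl]

end main

end PathCount

/-- `C_m(m(2j-1), mj - 1) = m * T_j` where `T_j = j(j+1)/2`. -/
theorem stmt_15 (m j : ℕ) (hm : 1 ≤ m) (hj : 1 ≤ j) :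
    Cm m (m * (2 * j - 1)) (m * j - 1) = m * (j * (j + 1) / 2) := by
  rw [Cm, main_count hm hj, Finset.card_product, Finset.card_range, pathSet_card]
  have h : 2*j - 1 + 1 - (j-1) = j + 1 := by omega
  rw [h]
  have h2 : j - 1 = j + 1 - 2 := by omega
  rw [h2, Nat.choose_symm (by omega), Nat.choose_two_right, Nat.add_sub_cancel,
    Nat.mul_comm (j+1) j]
end

section
/- For all integers m ≥ 2 and j ≥ 1, the number of (mj−2)-element subsets of {1,…,m(2j−1)} in which no two elements differ by exactly m equals m·C(j+2, 4) + C(m,2)·C(j+1, 2)², where C(a,b) denotes the binomial coefficient (note C(j+2,4) = 0 when j = 1, which accounts for the paper's indicator 1_{j>1}); that is, C_m(m(2j−1), mj−2) = m·C(j+2,4) + C(m,2)·C(j+1,2)². Equivalently, the n-tile tiling triangle entry ⟨mj+2, mj−2⟩_m equals this value. -/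
/-!
Writing `a ∈ {1, …, m q}` as `a = i m + r + 1` with `r < m`, `i < q` splits `{1, …, m q}` into
`m` disjoint paths `r + 1, r + 1 + m, …` of `q` vertices, and `a`, `a + m` are adjacent on
one of them. Independence polynomials multiply over such disjoint unions, so
`∑ₖ C_m(m q, k) Xᵏ = F_q ^ m`, where `F_q = ∑ₜ C(q + 1 - t, t) Xᵗ` is the independence polynomial
of a path on `q` vertices. For `q = 2 j - 1` the polynomial `F_q` has degree `j` and its reversal
begins `1 + C(j + 1, 2) X + C(j + 2, 4) X²`, so the coefficient of `X^(m j - 2)` in `F_q ^ m` is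
the coefficient of `X²` in the `m`-th power of that reversal.
-/

open Finset Polynomial

section IndepPoly

variable {α β ι : Type*} [DecidableEq α] [DecidableEq β]

noncomputable def indepPoly (σ : α → α) (s : Finset α) : ℕ[X] :=
  ∑ T ∈ s.powerset with ∀ a ∈ T, σ a ∉ T, X ^ #T

theorem coeff_indepPoly (σ : α → α) (s : Finset α) (k : ℕ) :
    (indepPoly σ s).coeff k = #{T ∈ s.powersetCard k | ∀ a ∈ T, σ a ∉ T} := by
  simp only [indepPoly, finsetSum_coeff, coeff_X_pow, sum_boole, Nat.cast_id, filter_filter,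
    powersetCard_eq_filter]
  congr 1
  ext T
  simp [and_comm, eq_comm]

@[simp]
theorem indepPoly_empty (σ : α → α) : indepPoly σ ∅ = 1 := by
  rw [indepPoly, powerset_empty, filter_singleton, if_pos (by simp)]
  simp

theorem indepPoly_map (f : α ↪ β) {σ : α → α} {τ : β → β} (hf : ∀ a, f (σ a) = τ (f a))
    (s : Finset α) : indepPoly τ (s.map f) = indepPoly σ s := by
  have hindep (T : Finset α) : (∀ b ∈ T.map f, τ b ∉ T.map f) ↔ ∀ a ∈ T, σ a ∉ T := by
    simp [← hf]
  refine (sum_bij (fun T _ => T.map f) ?_ (fun _ _ _ _ => map_inj.1) ?_ ?_).symm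
  · intro T hT
    simp only [mem_filter, mem_powerset] at hT ⊢
    exact ⟨map_subset_map.2 hT.1, (hindep T).2 hT.2⟩
  · intro U hU
    simp only [mem_filter, mem_powerset] at hU
    obtain ⟨T, hTs, rfl⟩ := subset_map_iff.1 hU.1
    exact ⟨T, mem_filter.2 ⟨mem_powerset.2 hTs, (hindep T).1 hU.2⟩, rfl⟩
  · intro T _
    rw [card_map]

theorem indepPoly_union {σ : α → α} {A B : Finset α} (hAB : Disjoint A B)
    (hA : ∀ a ∈ A, σ a ∉ B) (hB : ∀ b ∈ B, σ b ∉ A) :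
    indepPoly σ (A ∪ B) = indepPoly σ A * indepPoly σ B := by
  have hmono {T U : Finset α} (hUT : U ⊆ T) (hT : ∀ a ∈ T, σ a ∉ T) : ∀ a ∈ U, σ a ∉ U :=
    fun a ha h => hT a (hUT ha) (hUT h)
  rw [indepPoly, indepPoly, indepPoly, sum_mul_sum, ← sum_product']
  symm
  refine sum_nbij' (fun p => p.1 ∪ p.2) (fun T => (T ∩ A, T ∩ B)) ?_ ?_ ?_ ?_ ?_
  · rintro ⟨U, V⟩ h
    simp only [mem_product, mem_filter, mem_powerset] at h ⊢
    obtain ⟨⟨hUA, hU⟩, hVB, hV⟩ := h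
    refine ⟨union_subset_union hUA hVB, ?_⟩
    simp only [mem_union, not_or]
    rintro a (ha | ha)
    · exact ⟨hU a ha, fun h => hA a (hUA ha) (hVB h)⟩
    · exact ⟨fun h => hB a (hVB ha) (hUA h), hV a ha⟩
  · intro T h
    simp only [mem_product, mem_filter, mem_powerset] at h ⊢
    exact ⟨⟨inter_subset_right, hmono inter_subset_left h.2⟩,
      inter_subset_right, hmono inter_subset_left h.2⟩
  · rintro ⟨U, V⟩ h
    simp only [mem_product, mem_filter, mem_powerset] at h
    rw [union_inter_distrib_right, union_inter_distrib_right, inter_eq_left.2 h.1.1,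
      inter_eq_left.2 h.2.1, disjoint_iff_inter_eq_empty.1 (hAB.symm.mono_left h.2.1),
      disjoint_iff_inter_eq_empty.1 (hAB.mono_left h.1.1), union_empty, empty_union]
  · intro T h
    simp only [mem_filter, mem_powerset] at h
    rw [← inter_union_distrib_left, inter_eq_left.2 h.1]
  · rintro ⟨U, V⟩ h
    simp only [mem_product, mem_filter, mem_powerset] at h
    rw [← pow_add, card_union_of_disjoint (hAB.mono h.1.1 h.2.1)]

theorem indepPoly_insert {σ : α → α} {s : Finset α} {a : α} (ha : a ∉ s)
    (hσa : σ a ∉ insert a s) :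
    indepPoly σ (insert a s) = indepPoly σ s + X * indepPoly σ {b ∈ s | σ b ≠ a} := by
  simp only [indepPoly, sum_filter, sum_powerset_insert ha, mul_sum]
  congr 1
  have hindep_insert : ∀ T ∈ s.powerset, ((∀ b ∈ insert a T, σ b ∉ insert a T) ↔
      T ∈ {b ∈ s | σ b ≠ a}.powerset ∧ ∀ b ∈ T, σ b ∉ T) := by
    intro T hT
    rw [mem_powerset] at hT
    simp only [mem_insert, mem_powerset, subset_iff, mem_filter, not_or]
    grind
  refine (sum_subset (powerset_mono.2 (filter_subset _ s)) fun T hT hT' => ?_).symm.trans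
    (sum_congr rfl fun T hT => ?_)
  · rw [if_neg fun h => hT' ((hindep_insert T hT).1 h).1]
  · have hTs : T ∈ s.powerset := powerset_mono.2 (filter_subset _ s) hT
    have haT : a ∉ T := fun h => ha (mem_powerset.1 hTs h)
    rw [if_congr (hindep_insert T hTs) rfl rfl, card_insert_of_notMem haT, pow_succ', mul_ite,
      mul_zero]
    simp only [hT, true_and]

theorem indepPoly_product [DecidableEq ι] (σ : α → α) (I : Finset ι) (s : Finset α) :
    indepPoly (Prod.map id σ) (I ×ˢ s) = indepPoly σ s ^ #I := by
  induction I using Finset.induction_on with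
  | empty => simp
  | insert i I hi ih =>
    rw [card_insert_of_notMem hi, pow_succ', insert_eq, union_product, indepPoly_union,
      singleton_product, indepPoly_map (τ := Prod.map id σ) _ (fun _ => rfl), ih]
    · exact disjoint_product.2 (Or.inl (disjoint_singleton_left.2 hi))
    · simp only [mem_product, mem_singleton, Prod.map_fst, id]
      grind
    · simp only [mem_product, mem_singleton, Prod.map_fst, id]
      grind

end IndepPoly

theorem indepPoly_range_add_two (q : ℕ) :
    indepPoly (· + 1) (range (q + 2)) =
      indepPoly (· + 1) (range (q + 1)) + X * indepPoly (· + 1) (range q) := by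
  rw [range_add_one, indepPoly_insert (by simp) (by simp)]
  congr 3
  ext b
  simp only [mem_filter, mem_range]
  omega

theorem indepPoly_range_one : indepPoly (· + 1) (range 1) = 1 + X := by
  rw [range_one, ← insert_empty_eq, indepPoly_insert (notMem_empty 0) (by simp)]
  simp

theorem coeff_indepPoly_range (q t : ℕ) :
    (indepPoly (· + 1) (range q)).coeff t = (q + 1 - t).choose t := by
  induction q using Nat.twoStepInduction generalizing t with
  | zero => rcases t with _ | t <;> simp [coeff_one]
  | one => rw [indepPoly_range_one]; rcases t with _ | _ | t <;> simp [coeff_one, coeff_X]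
  | more q ih ih' =>
    rcases t with _ | t
    · simp [indepPoly_range_add_two, ih']
    · rw [indepPoly_range_add_two, coeff_add, coeff_X_mul, ih, ih']
      rcases le_or_gt t (q + 1) with h | h
      · rw [show q + 2 + 1 - (t + 1) = (q + 1 - t) + 1 by omega,
          show q + 1 + 1 - (t + 1) = q + 1 - t by omega, Nat.choose_succ_succ', add_comm]
      · rw [Nat.choose_eq_zero_of_lt (show q + 1 + 1 - (t + 1) < t + 1 by omega),
          Nat.choose_eq_zero_of_lt (show q + 1 - t < t by omega),
          Nat.choose_eq_zero_of_lt (show q + 2 + 1 - (t + 1) < t + 1 by omega)]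

theorem natDegree_indepPoly_range_le (q : ℕ) :
    (indepPoly (· + 1) (range q)).natDegree ≤ (q + 1) / 2 :=
  natDegree_le_iff_coeff_eq_zero.2 fun t ht => by
    rw [coeff_indepPoly_range]
    exact Nat.choose_eq_zero_of_lt (by omega)

def chainEmbedding (m : ℕ) [NeZero m] : Fin m × ℕ ↪ ℕ :=
  ((Equiv.prodComm _ _).trans (Nat.divModEquiv m).symm).toEmbedding.trans (addRightEmbedding 1)

@[simp]
theorem chainEmbedding_apply (m : ℕ) [NeZero m] (r : Fin m) (i : ℕ) :
    chainEmbedding m (r, i) = i * m + r + 1 :=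
  rfl

theorem map_chainEmbedding (m q : ℕ) [NeZero m] :
    (univ ×ˢ range q).map (chainEmbedding m) = Icc 1 (m * q) := by
  ext x
  simp only [mem_map, mem_product, mem_univ, true_and, mem_range, Prod.exists,
    chainEmbedding_apply, mem_Icc]
  constructor
  · rintro ⟨r, i, hi, rfl⟩
    have hr := r.isLt
    constructor <;> nlinarith
  · rintro ⟨hx1, hxq⟩
    have hm := Nat.pos_of_neZero m
    refine ⟨⟨(x - 1) % m, Nat.mod_lt _ hm⟩, (x - 1) / m, ?_, ?_⟩
    · rw [Nat.div_lt_iff_lt_mul hm, mul_comm q]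
      omega
    · have := Nat.div_add_mod' (x - 1) m
      simp only
      omega

theorem Cm_mul_eq_coeff_pow {m : ℕ} (hm : 0 < m) (q k : ℕ) :
    Cm m (m * q) k = (indepPoly (· + 1) (range q) ^ m).coeff k := by
  have := NeZero.of_pos hm
  have hshift : ∀ p : Fin m × ℕ,
      chainEmbedding m (Prod.map id (· + 1) p) = chainEmbedding m p + m := by
    rintro ⟨r, i⟩
    simp only [Prod.map_apply, id, chainEmbedding_apply]
    ring
  rw [Cm, ← coeff_indepPoly, ← map_chainEmbedding, indepPoly_map _ hshift, indepPoly_product,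
    card_univ, Fintype.card_fin]

theorem coeff_two_pow_of_coeff_zero_eq_one {R : Type*} [CommSemiring R] {p : R[X]}
    (h : p.coeff 0 = 1) (m : ℕ) :
    (p ^ m).coeff 2 = m * p.coeff 2 + m.choose 2 * p.coeff 1 ^ 2 := by
  suffices ∀ m : ℕ, (p ^ m).coeff 0 = 1 ∧ (p ^ m).coeff 1 = m * p.coeff 1 ∧
      (p ^ m).coeff 2 = m * p.coeff 2 + m.choose 2 * p.coeff 1 ^ 2 from (this m).2.2
  intro m
  induction m with
  | zero => simp [coeff_one]
  | succ m ih =>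
    obtain ⟨h0, h1, h2⟩ := ih
    simp only [pow_succ, coeff_mul, Nat.sum_antidiagonal_eq_sum_range_succ_mk, sum_range_succ,
      sum_range_zero, h0, h1, h2, h, Nat.choose_succ_succ', Nat.choose_one_right]
    push_cast
    exact ⟨by ring, by ring, by ring⟩

theorem reflect_pow {R : Type*} [CommSemiring R] {p : R[X]} {N : ℕ} (hp : p.natDegree ≤ N)
    (m : ℕ) : reflect (m * N) (p ^ m) = reflect N p ^ m := by
  induction m with
  | zero => simp
  | succ m ih =>
    rw [pow_succ, pow_succ, add_mul, one_mul,
      reflect_mul _ _ (natDegree_pow_le_of_le m hp) hp, ih]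

theorem coeff_reflect_indepPoly_range {j : ℕ} (hj : 0 < j) (i : ℕ) :
    (reflect j (indepPoly (· + 1) (range (2 * j - 1)))).coeff i = (j + i).choose (2 * i) := by
  rw [coeff_reflect, coeff_indepPoly_range]
  rcases le_or_gt i j with h | h
  · rw [revAt_le h, show 2 * j - 1 + 1 - (j - i) = j + i by omega]
    exact Nat.choose_symm_of_eq_add (by omega)
  · rw [revAt_eq_self_of_lt h, Nat.choose_eq_zero_of_lt (by omega),
      Nat.choose_eq_zero_of_lt (by omega)]

/-- `C_m(m(2j-1), mj - 2) = m·C(j+2, 4) + C(m,2)·C(j+1, 2)²` for `m ≥ 2`, `j ≥ 1`. -/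
theorem stmt_16 (m j : ℕ) (hm : 2 ≤ m) (hj : 1 ≤ j) :
    Cm m (m * (2 * j - 1)) (m * j - 2)
      = m * Nat.choose (j + 2) 4 + Nat.choose m 2 * Nat.choose (j + 1) 2 ^ 2 := by
  set P := indepPoly (· + 1) (range (2 * j - 1))
  have hdeg : P.natDegree ≤ j := (natDegree_indepPoly_range_le _).trans (by omega)
  have hP := coeff_reflect_indepPoly_range hj
  rw [Cm_mul_eq_coeff_pow (by omega), ← revAt_le (show 2 ≤ m * j by nlinarith), ← coeff_reflect,
    reflect_pow hdeg, coeff_two_pow_of_coeff_zero_eq_one (by rw [hP]; simp), hP, hP]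
  simp
end

section
/- Let B_n = Σ_{k=0}^{n} C_3(n+k−3, k) (subtraction truncated at 0) be the number of n-tile tilings of a board using unit squares and (1,2)-fences. Then for every n ≥ 2, B_n = 2·B_{n−1} − B_{n−2} + 3·B_{n−3} − 2·B_{n−4}, with the convention B_i = 0 for i < 0; equivalently, B_n + B_{n−2} + 2·B_{n−4} = 2·B_{n−1} + 3·B_{n−3}. -/
/-- `B3 i` is the number of `i`-tile tilings of a board using unit squares and
`(1,2)`-fences (the row sums of the `m = 3` `n`-tile tiling triangle), with
`B3 i = 0` for `i < 0`. -/
def B3 (i : ℤ) : ℤ :=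
  if i < 0 then 0
  else ∑ k ∈ Finset.range (i.toNat + 1), (Cm 3 (i.toNat + k - 3) k : ℤ)

/-! Admissible sets are built from left to right, and whether `N + 1` may be added depends
only on the membership of the last three positions `N - 2, N - 1, N`. So `Cm 3 N k` splits into
eight transfer counts `tailCount N k t`, one for each tail pattern `t`. Summed along the diagonals
`N - k = d`, from which `B3 (d + 3)` is formed, a tail ending in `true` reduces at the same level to
the tail one step shorter, and the four tails ending in `false` evolve by a `4 × 4` linear map with
characteristic polynomial `x⁴ - 2x³ + x² - 3x + 2`; this is the recurrence. For `n ≤ 6`, where the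
truncation in `B3` matters, both sides are computed. -/

open Finset

theorem card_filter_snd_eq {α β γ : Type*} [Fintype β] [DecidableEq β] [DecidableEq γ]
    (s : Finset α) (g : α → β × γ) (c : γ) :
    #{x ∈ s | (g x).2 = c} = ∑ b, #{x ∈ s | g x = (b, c)} := by
  rw [card_eq_sum_card_fiberwise (f := fun x => (g x).1) (t := univ)
    fun _ _ => mem_coe.2 (mem_univ _)]
  refine sum_congr rfl fun b _ => ?_
  rw [filter_filter]
  congr! 2 with x
  rw [Prod.ext_iff, and_comm]

theorem subset_Icc_iff_add_one_notMem {a N : ℕ} {S : Finset ℕ} (h : S ⊆ Icc a (N + 1)) :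
    S ⊆ Icc a N ↔ N + 1 ∉ S := by
  refine ⟨fun h' hN => by simpa using h' hN, fun hN x hx => ?_⟩
  have := mem_Icc.1 (h hx)
  have : x ≠ N + 1 := fun e => hN (e ▸ hx)
  exact mem_Icc.2 (by omega)

-- `S` and `S + m` are disjoint subsets of `{1, …, N + m}`.
theorem Cm_eq_zero_of_lt {m N k : ℕ} (h : N + m < 2 * k) : Cm m N k = 0 := by
  rw [Cm, card_eq_zero, filter_eq_empty_iff]
  intro S hS hfree
  obtain ⟨hsub, rfl⟩ := mem_powersetCard.1 hS
  have hdisj : Disjoint S (S.map (addRightEmbedding m)) := by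
    refine disjoint_left.2 fun x hx hx' => ?_
    obtain ⟨y, hy, rfl⟩ := mem_map.1 hx'
    exact hfree y hy hx
  have hsub' : S ∪ S.map (addRightEmbedding m) ⊆ Icc 1 (N + m) := by
    refine union_subset (hsub.trans (Icc_subset_Icc_right (by omega))) fun x hx => ?_
    obtain ⟨y, hy, rfl⟩ := mem_map.1 hx
    have := mem_Icc.1 (hsub hy)
    simp only [addRightEmbedding_apply, mem_Icc]
    omega
  have := card_le_card hsub'
  rw [card_union_of_disjoint hdisj, card_map, Nat.card_Icc] at this
  omega

def admissibleSets (N k : ℕ) : Finset (Finset ℕ) :=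
  ((Icc 1 N).powersetCard k).filter fun S => ∀ a ∈ S, a + 3 ∉ S

theorem mem_admissibleSets {N k : ℕ} {S : Finset ℕ} :
    S ∈ admissibleSets N k ↔ S ⊆ Icc 1 N ∧ #S = k ∧ ∀ a ∈ S, a + 3 ∉ S := by
  simp [admissibleSets, and_assoc]

-- Truncated subtraction sends positions left of the board to `0 ∉ S`, so they read as `false`.
def tailPattern (N : ℕ) (S : Finset ℕ) : Bool × Bool × Bool :=
  (decide (N - 2 ∈ S), decide (N - 1 ∈ S), decide (N ∈ S))

def tailCount : ℕ → ℕ → Bool × Bool × Bool → ℕ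
  | 0, k, t => if k = 0 ∧ t = (false, false, false) then 1 else 0
  | N + 1, k, (a, b, false) => tailCount N k (true, a, b) + tailCount N k (false, a, b)
  | _ + 1, 0, (_, _, true) => 0
  | N + 1, k + 1, (a, b, true) => tailCount N k (false, a, b)

theorem filter_tailPattern_succ_false (N k : ℕ) (a b : Bool) :
    {S ∈ admissibleSets (N + 1) k | tailPattern (N + 1) S = (a, b, false)} =
      {S ∈ admissibleSets N k | (tailPattern N S).2 = (a, b)} := by
  ext S
  simp only [mem_filter, mem_admissibleSets, tailPattern, Prod.mk.injEq, Nat.add_sub_cancel,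
    show N + 1 - 2 = N - 1 by omega, decide_eq_false_iff_not]
  constructor
  · rintro ⟨⟨hsub, hk, hfree⟩, ha, hb, hN⟩
    exact ⟨⟨(subset_Icc_iff_add_one_notMem hsub).2 hN, hk, hfree⟩, ha, hb⟩
  · rintro ⟨⟨hsub, hk, hfree⟩, ha, hb⟩
    have hsub' : S ⊆ Icc 1 (N + 1) := hsub.trans (Icc_subset_Icc_right N.le_succ)
    exact ⟨⟨hsub', hk, hfree⟩, ha, hb, (subset_Icc_iff_add_one_notMem hsub').1 hsub⟩

theorem insert_add_three_free_iff {N : ℕ} {T : Finset ℕ} (hT : T ⊆ Icc 1 N) :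
    (∀ x ∈ insert (N + 1) T, x + 3 ∉ insert (N + 1) T) ↔
      (∀ x ∈ T, x + 3 ∉ T) ∧ N - 2 ∉ T := by
  have hle : ∀ x ∈ T, 1 ≤ x ∧ x ≤ N := fun x hx => mem_Icc.1 (hT hx)
  simp only [mem_insert, forall_eq_or_imp]
  constructor
  · rintro ⟨-, hfree⟩
    refine ⟨fun x hx hx3 => hfree x hx (Or.inr hx3), fun h2 => ?_⟩
    have := hle _ h2
    exact hfree _ h2 (Or.inl (by omega))
  · rintro ⟨hfree, h2⟩
    refine ⟨fun h => h.elim (by omega) fun h => by have := hle _ h; omega, fun x hx => ?_⟩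
    have := hle x hx
    refine not_or.2 ⟨fun h => h2 ?_, hfree x hx⟩
    rwa [show N - 2 = x by omega]

theorem filter_tailPattern_succ_true (N k : ℕ) (a b : Bool) :
    {S ∈ admissibleSets (N + 1) (k + 1) | tailPattern (N + 1) S = (a, b, true)} =
      {T ∈ admissibleSets N k | tailPattern N T = (false, a, b)}.image (insert (N + 1)) := by
  ext S
  simp only [mem_filter, mem_image, mem_admissibleSets, tailPattern, Prod.mk.injEq,
    Nat.add_sub_cancel, show N + 1 - 2 = N - 1 by omega, decide_eq_true_eq,
    decide_eq_false_iff_not]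
  constructor
  · rintro ⟨⟨hsub, hk, hfree⟩, ha, hb, hN⟩
    set T := S.erase (N + 1)
    have hsubT : T ⊆ Icc 1 N :=
      (subset_Icc_iff_add_one_notMem ((erase_subset _ _).trans hsub)).2 (notMem_erase _ _)
    rw [← insert_erase hN, insert_add_three_free_iff hsubT] at hfree
    refine ⟨T, ⟨⟨hsubT, by rw [card_erase_of_mem hN, hk]; rfl, hfree.1⟩, hfree.2, ?_, ?_⟩,
      insert_erase hN⟩
    · simpa [T, show N - 1 ≠ N + 1 by omega] using ha
    · simpa [T] using hb
  · rintro ⟨T, ⟨⟨hsub, rfl, hfree⟩, h2, ha, hb⟩, rfl⟩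
    have hN : N + 1 ∉ T := fun h => by simpa using hsub h
    refine ⟨⟨insert_subset (by simp) (hsub.trans (Icc_subset_Icc_right N.le_succ)),
      card_insert_of_notMem hN, (insert_add_three_free_iff hsub).2 ⟨hfree, h2⟩⟩, ?_, ?_, mem_insert_self _ _⟩
    · simpa [show N - 1 ≠ N + 1 by omega] using ha
    · simpa using hb

theorem card_filter_tailPattern (N k : ℕ) (t : Bool × Bool × Bool) :
    #{S ∈ admissibleSets N k | tailPattern N S = t} = tailCount N k t := by
  induction N generalizing k t with
  | zero =>
    cases k with
    | zero =>
      obtain ⟨a, b, c⟩ := t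
      cases a <;> cases b <;> cases c <;> decide
    | succ k => simp [admissibleSets, tailCount]
  | succ N ih =>
    obtain ⟨a, b, _ | _⟩ := t
    · rw [filter_tailPattern_succ_false, card_filter_snd_eq, Fintype.sum_bool, ih, ih]
      rfl
    · cases k with
      | zero =>
        rw [tailCount, card_eq_zero, filter_eq_empty_iff]
        intro S hS
        rw [card_eq_zero.1 (mem_admissibleSets.1 hS).2.1]
        simp [tailPattern]
      | succ k =>
        rw [filter_tailPattern_succ_true, card_image_of_injOn, ih]
        · rfl
        · intro T₁ h₁ T₂ h₂ e
          have hN : ∀ T ∈ admissibleSets N k, N + 1 ∉ T := fun T hT h => by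
            simpa using (mem_admissibleSets.1 hT).1 h
          rw [← erase_insert (hN T₁ (mem_filter.1 h₁).1), e,
            erase_insert (hN T₂ (mem_filter.1 h₂).1)]

theorem Cm_three_eq_sum_tailCount (N k : ℕ) : Cm 3 N k = ∑ t, tailCount N k t := by
  rw [Cm, card_eq_sum_card_fiberwise (f := tailPattern N) (t := univ)
    fun _ _ => mem_coe.2 (mem_univ _)]
  exact sum_congr rfl fun t _ => card_filter_tailPattern N k t

theorem tailCount_eq_zero_of_lt {N k : ℕ} (h : N + 3 < 2 * k) (t : Bool × Bool × Bool) :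
    tailCount N k t = 0 := by
  have h0 := Cm_eq_zero_of_lt (m := 3) h
  rw [Cm_three_eq_sum_tailCount, sum_eq_zero_iff] at h0
  exact h0 t (mem_univ t)

theorem tailCount_succ_false (N k : ℕ) (a b : Bool) :
    tailCount (N + 1) k (a, b, false) =
      tailCount N k (true, a, b) + tailCount N k (false, a, b) := by
  cases k <;> rfl

-- Admissible sets with `N - k = d`, the diagonals summed in `B3 (d + 3)`.
def diagCount (d : ℕ) (t : Bool × Bool × Bool) : ℕ :=
  ∑ k ∈ range (d + 4), tailCount (d + k) k t

theorem diagCount_eq_sum_range {d K : ℕ} (hK : d + 4 ≤ K) (t : Bool × Bool × Bool) :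
    diagCount d t = ∑ k ∈ range K, tailCount (d + k) k t := by
  rw [diagCount, ← sum_range_add_sum_Ico _ hK, left_eq_add]
  exact sum_eq_zero fun k hk => tailCount_eq_zero_of_lt (by rw [mem_Ico] at hk; omega) t

theorem diagCount_succ_false (d : ℕ) (a b : Bool) :
    diagCount (d + 1) (a, b, false) = diagCount d (true, a, b) + diagCount d (false, a, b) := by
  rw [diagCount, diagCount_eq_sum_range (K := d + 5) (by omega),
    diagCount_eq_sum_range (K := d + 5) (by omega), ← sum_add_distrib]
  refine sum_congr rfl fun k _ => ?_
  rw [show d + 1 + k = d + k + 1 by omega, tailCount_succ_false]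

theorem diagCount_true (d : ℕ) (a b : Bool) :
    diagCount d (a, b, true) = diagCount d (false, a, b) := by
  rw [diagCount_eq_sum_range (K := d + 4 + 1) le_self_add, sum_range_succ', diagCount]
  have h0 : tailCount (d + 0) 0 (a, b, true) = 0 := by cases d <;> simp [tailCount]
  rw [h0, add_zero]
  rfl

def levelCount (d : ℕ) : ℕ := ∑ t, diagCount d t

theorem levelCount_recurrence (d : ℕ) :
    levelCount (d + 4) + levelCount (d + 2) + 2 * levelCount d =
      2 * levelCount (d + 3) + 3 * levelCount (d + 1) := by
  simp only [levelCount, Fintype.sum_prod_type, Fintype.sum_bool, diagCount_true,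
    diagCount_succ_false]
  ring

theorem B3_eq_levelCount {n : ℤ} {d : ℕ} (h : n = d + 3) : B3 n = levelCount d := by
  rw [B3, if_neg (by omega), show n = ((d + 3 : ℕ) : ℤ) by push_cast; exact h,
    Int.toNat_natCast, levelCount]
  simp only [diagCount, Nat.cast_sum]
  rw [sum_comm]
  refine sum_congr rfl fun k _ => ?_
  rw [show d + 3 + k - 3 = d + k by omega, Cm_three_eq_sum_tailCount, Nat.cast_sum]

/-- For `n ≥ 2`, `B_n = 2B_{n-1} - B_{n-2} + 3B_{n-3} - 2B_{n-4}`. -/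
theorem stmt_17 (n : ℤ) (hn : 2 ≤ n) :
    B3 n = 2 * B3 (n - 1) - B3 (n - 2) + 3 * B3 (n - 3) - 2 * B3 (n - 4) := by
  rcases le_or_gt n 6 with hsmall | hlarge
  · interval_cases n <;> decide
  · obtain ⟨d, rfl⟩ : ∃ d : ℕ, n = d + 7 := ⟨(n - 7).toNat, by omega⟩
    rw [B3_eq_levelCount (n := d + 7) (d := d + 4) (by push_cast; ring),
      B3_eq_levelCount (n := d + 7 - 1) (d := d + 3) (by push_cast; ring),
      B3_eq_levelCount (n := d + 7 - 2) (d := d + 2) (by push_cast; ring),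
      B3_eq_levelCount (n := d + 7 - 3) (d := d + 1) (by push_cast; ring),
      B3_eq_levelCount (n := d + 7 - 4) (d := d) (by ring)]
    have := levelCount_recurrence d
    omega
end

section
/- Define T(a,b) = C_3(a+b−3, b) for integers a, b ≥ 0 (subtraction truncated at 0), the entries of the m = 3 n-tile tiling triangle. Then for all integers n ≥ 4 and k ≥ 4, T(n,k) = T(n−1,k) + T(n−1,k−1) − T(n−2,k−1) + T(n−3,k−1) + T(n−3,k−2) + T(n−3,k−3) − T(n−4,k−3) − T(n−4,k−4); equivalently, in nonnegative form, T(n,k) + T(n−2,k−1) + T(n−4,k−3) + T(n−4,k−4) = T(n−1,k) + T(n−1,k−1) + T(n−3,k−1) + T(n−3,k−2) + T(n−3,k−3). -/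
open Finset


/-- Transfer-automaton counting function (over ℤ to allow negative `k`). -/
def gg : ℕ → Bool → Bool → Bool → ℤ → ℤ
  | 0, _, _, _, k => if k = 0 then 1 else 0
  | (N+1), a, b, c, k => gg N false a b k + (if c then 0 else gg N true a b (k-1))

lemma gg_succ (N : ℕ) (a b c : Bool) (k : ℤ) :
    gg (N+1) a b c k = gg N false a b k + (if c then 0 else gg N true a b (k-1)) := rfl

lemma gg_neg : ∀ (N : ℕ) (a b c : Bool) (k : ℤ), k < 0 → gg N a b c k = 0 := by
  intro N
  induction N with
  | zero => intro a b c k hk; simp [gg]; omega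
  | succ N ih =>
      intro a b c k hk
      rw [gg_succ, ih _ _ _ _ hk, ih _ _ _ _ (by omega)]
      cases c <;> simp

lemma gg_big : ∀ (N : ℕ) (a b c : Bool) (k : ℤ), (N : ℤ) < k → gg N a b c k = 0 := by
  intro N
  induction N with
  | zero => intro a b c k hk; simp [gg]; omega
  | succ N ih =>
      intro a b c k hk
      rw [gg_succ, ih _ _ _ _ (by push_cast at hk ⊢; omega), ih _ _ _ _ (by push_cast at hk ⊢; omega)]
      cases c <;> simp

/-- The nine-term recurrence, for the automaton counts. -/
lemma gg_ident : ∀ (M : ℕ) (a b c : Bool) (k : ℤ),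
    gg (M+8) a b c k + gg (M+5) a b c (k-1) + gg (M+1) a b c (k-3) + gg M a b c (k-4)
      = gg (M+7) a b c k + gg (M+6) a b c (k-1) + gg (M+4) a b c (k-1)
          + gg (M+3) a b c (k-2) + gg (M+2) a b c (k-3) := by
  intro M
  induction M with
  | zero =>
      intro a b c k
      rcases lt_or_ge k 0 with hk | hk
      · rw [gg_neg _ _ _ _ _ hk, gg_neg _ _ _ _ _ hk,
          gg_neg _ _ _ _ _ (by omega), gg_neg _ _ _ _ _ (by omega),
          gg_neg _ _ _ _ _ (by omega), gg_neg _ _ _ _ _ (by omega),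
          gg_neg _ _ _ _ _ (by omega), gg_neg _ _ _ _ _ (by omega),
          gg_neg _ _ _ _ _ (by omega)]
        ring
      rcases lt_or_ge (8:ℤ) k with hk2 | hk2
      · rw [gg_big _ _ _ _ _ (by push_cast; omega), gg_big _ _ _ _ _ (by push_cast; omega),
          gg_big _ _ _ _ _ (by push_cast; omega), gg_big _ _ _ _ _ (by push_cast; omega),
          gg_big _ _ _ _ _ (by push_cast; omega), gg_big _ _ _ _ _ (by push_cast; omega),
          gg_big _ _ _ _ _ (by push_cast; omega), gg_big _ _ _ _ _ (by push_cast; omega),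
          gg_big _ _ _ _ _ (by push_cast; omega)]
        ring
      interval_cases k <;> revert a b c <;> decide
  | succ M ih =>
      intro a b c k
      have h1 := ih false a b k
      have h2 := ih true a b (k-1)
      show gg (M+8+1) a b c k + gg (M+5+1) a b c (k-1) + gg (M+1+1) a b c (k-3)
            + gg (M+0+1) a b c (k-4)
          = gg (M+7+1) a b c k + gg (M+6+1) a b c (k-1) + gg (M+4+1) a b c (k-1)
              + gg (M+3+1) a b c (k-2) + gg (M+2+1) a b c (k-3)
      rw [gg_succ (M+8) a b c k, gg_succ (M+5) a b c (k-1), gg_succ (M+1) a b c (k-3),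
        gg_succ (M+0) a b c (k-4), gg_succ (M+7) a b c k, gg_succ (M+6) a b c (k-1),
        gg_succ (M+4) a b c (k-1), gg_succ (M+3) a b c (k-2), gg_succ (M+2) a b c (k-3)]
      have e0 : M + 0 = M := rfl
      rw [e0]
      cases c <;> simp only [Bool.false_eq_true, if_false, if_true] <;>
        · ring_nf
          ring_nf at h1 h2
          omega


/-- Refined count: valid `k`-subsets of `{1,…,N}` (no two elements differing by 3),
additionally avoiding `N-2`, `N-1`, `N` according to the flags. -/
def Vf (N : ℕ) (a b c : Bool) (k : ℕ) : ℕ :=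
  (((Finset.Icc 1 N).powersetCard k).filter
    (fun S => (∀ x ∈ S, x + 3 ∉ S) ∧ (a → N - 2 ∉ S) ∧ (b → N - 1 ∉ S) ∧ (c → N ∉ S))).card

lemma Vf_zero (N : ℕ) (a b c : Bool) : Vf N a b c 0 = 1 := by
  simp [Vf, Finset.powersetCard_zero, Finset.filter_singleton]

lemma Vf_succ (N : ℕ) (a b c : Bool) (k : ℕ) :
    Vf (N+1) a b c (k+1) = Vf N false a b (k+1) + (if c then 0 else Vf N true a b k) := by
  classical
  have e2 : N + 1 - 2 = N - 1 := by omega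
  have e1 : N + 1 - 1 = N := by omega
  unfold Vf
  rw [e2, e1]
  rw [← Finset.card_filter_add_card_filter_not
    (s := (((Finset.Icc 1 (N+1)).powersetCard (k+1))).filter
      (fun S => (∀ x ∈ S, x + 3 ∉ S) ∧ (a → N - 1 ∉ S) ∧ (b → N ∉ S) ∧ (c → N + 1 ∉ S)))
    (p := fun S => N + 1 ∈ S), Nat.add_comm]
  congr 1
  · -- piece without N+1
    congr 1
    ext S
    simp only [Finset.mem_filter, Finset.mem_powersetCard]
    constructor
    · rintro ⟨⟨⟨hsub, hcard⟩, hP, ha, hb, hc⟩, hnot⟩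
      refine ⟨⟨?_, hcard⟩, hP, by simp, ha, hb⟩
      intro x hx
      have h := hsub hx
      rw [Finset.mem_Icc] at h ⊢
      have : x ≠ N + 1 := fun h' => hnot (h' ▸ hx)
      omega
    · rintro ⟨⟨hsub, hcard⟩, hP, _, ha, hb⟩
      have hnot : N + 1 ∉ S := by
        intro h
        have := hsub h
        rw [Finset.mem_Icc] at this
        omega
      refine ⟨⟨⟨?_, hcard⟩, hP, ha, hb, fun _ => hnot⟩, hnot⟩
      intro x hx
      have h := hsub hx
      rw [Finset.mem_Icc] at h ⊢
      omega
  · -- piece with N+1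
    cases c with
    | true =>
        simp only [if_true]
        rw [Finset.card_eq_zero, Finset.filter_eq_empty_iff]
        intro S hS hmem
        rw [Finset.mem_filter] at hS
        exact hS.2.2.2.2 trivial hmem
    | false =>
        simp only [Bool.false_eq_true, if_false]
        refine Finset.card_bij' (fun S _ => S.erase (N+1)) (fun S _ => insert (N+1) S)
          ?_ ?_ ?_ ?_
        · -- hi
          intro S hS
          simp only [Finset.mem_filter, Finset.mem_powersetCard] at hS ⊢
          obtain ⟨⟨⟨hsub, hcard⟩, hP, ha, hb, _⟩, hmem⟩ := hS
          refine ⟨⟨?_, ?_⟩, ?_, ?_, ?_, ?_⟩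
          · intro x hx
            rw [Finset.mem_erase] at hx
            have h := hsub hx.2
            rw [Finset.mem_Icc] at h ⊢
            have := hx.1
            omega
          · rw [Finset.card_erase_of_mem hmem, hcard]
            omega
          · intro x hx
            have hx' := Finset.mem_of_mem_erase hx
            exact fun h => hP x hx' (Finset.mem_of_mem_erase h)
          · -- N - 2 ∉ erase
            intro _ h
            have h' := Finset.mem_of_mem_erase h
            rcases Nat.lt_or_ge N 2 with hN | hN
            · have := hsub h'
              rw [Finset.mem_Icc] at this
              omega
            · have : N - 2 + 3 = N + 1 := by omega
              exact hP _ h' (this ▸ hmem)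
          · intro hA
            exact fun h => ha hA (Finset.mem_of_mem_erase h)
          · intro hB
            exact fun h => hb hB (Finset.mem_of_mem_erase h)
        · -- hj
          intro S hS
          simp only [Finset.mem_filter, Finset.mem_powersetCard] at hS ⊢
          obtain ⟨⟨hsub, hcard⟩, hP, hflag, ha, hb⟩ := hS
          have hnotmem : N + 1 ∉ S := by
            intro h
            have := hsub h
            rw [Finset.mem_Icc] at this
            omega
          have hbound : ∀ x ∈ S, 1 ≤ x ∧ x ≤ N := by
            intro x hx
            have := hsub hx
            rwa [Finset.mem_Icc] at this
          refine ⟨⟨⟨?_, ?_⟩, ?_, ?_, ?_, by simp⟩, Finset.mem_insert_self _ _⟩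
          · intro x hx
            rw [Finset.mem_insert] at hx
            rw [Finset.mem_Icc]
            rcases hx with rfl | hx
            · omega
            · have := hbound x hx; omega
          · rw [Finset.card_insert_of_notMem hnotmem, hcard]
          · intro x hx
            rw [Finset.mem_insert] at hx
            intro hcon
            rw [Finset.mem_insert] at hcon
            rcases hx with rfl | hx
            · rcases hcon with h | h
              · omega
              · have := hbound _ h; omega
            · rcases hcon with h | h
              · -- x + 3 = N + 1, so x = N - 2
                have hx2 : x = N - 2 ∧ 2 ≤ N := by have := hbound x hx; omega
                exact hflag trivial (hx2.1 ▸ hx)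
              · exact hP x hx h
          · intro hA
            rw [Finset.mem_insert]
            rintro (h | h)
            · omega
            · exact ha hA h
          · intro hB
            rw [Finset.mem_insert]
            rintro (h | h)
            · omega
            · exact hb hB h
        · -- left inverse
          intro S hS
          simp only [Finset.mem_filter] at hS
          exact Finset.insert_erase hS.2
        · -- right inverse
          intro S hS
          simp only [Finset.mem_filter, Finset.mem_powersetCard] at hS
          apply Finset.erase_insert
          intro h
          have := hS.1.1 h
          rw [Finset.mem_Icc] at this
          omega

/-- The `m = 3` `n`-tile tiling triangle. -/
def T (a b : ℕ) : ℕ := Cm 3 (a + b - 3) b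


lemma Vf_eq_gg : ∀ (N : ℕ) (a b c : Bool) (k : ℕ), (Vf N a b c k : ℤ) = gg N a b c (k : ℤ) := by
  intro N
  induction N with
  | zero =>
      intro a b c k
      cases k with
      | zero => rw [Vf_zero]; simp [gg]
      | succ k =>
          have h0 : Vf 0 a b c (k+1) = 0 := by
            rw [Vf, Finset.Icc_eq_empty (by omega), Finset.powersetCard_eq_empty.2 (by simp)]
            simp
          rw [h0, gg]
          rw [if_neg (by push_cast; omega)]
          simp
  | succ N ih =>
      intro a b c k
      cases k with
      | zero =>
          have h := ih false a b 0
          rw [Vf_zero] at h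
          push_cast at h
          rw [Vf_zero]
          push_cast
          rw [gg_succ, gg_neg N true a b (0-1 : ℤ) (by norm_num)]
          cases c <;> simp <;> omega
      | succ k =>
          rw [Vf_succ]
          cases c with
          | false =>
              simp only [Bool.false_eq_true, if_false]
              push_cast
              rw [ih, ih, gg_succ]
              simp only [Bool.false_eq_true, if_false]
              rw [show ((k:ℤ)+1) - 1 = (k:ℤ) by ring]
              push_cast
              ring
          | true =>
              simp only [if_true]
              push_cast
              rw [ih, gg_succ]
              simp only [if_true]
              push_cast
              ring
lemma cmz (N k : ℕ) : (Cm 3 N k : ℤ) = gg N false false false (k : ℤ) := by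
  rw [← Vf_eq_gg]
  congr 1
  unfold Cm Vf
  congr 1
  apply Finset.filter_congr
  intro S _
  simp

lemma key (m k' : ℕ) :
    Cm 3 (m+8) (k'+4) + Cm 3 (m+5) (k'+3) + Cm 3 (m+1) (k'+1) + Cm 3 m k'
      = Cm 3 (m+7) (k'+4) + Cm 3 (m+6) (k'+3) + Cm 3 (m+4) (k'+3)
          + Cm 3 (m+3) (k'+2) + Cm 3 (m+2) (k'+1) := by
  have h := gg_ident m false false false ((k':ℤ)+4)
  have goalZ : ((Cm 3 (m+8) (k'+4) : ℤ) + Cm 3 (m+5) (k'+3) + Cm 3 (m+1) (k'+1) + Cm 3 m k')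
      = (Cm 3 (m+7) (k'+4) : ℤ) + Cm 3 (m+6) (k'+3) + Cm 3 (m+4) (k'+3)
          + Cm 3 (m+3) (k'+2) + Cm 3 (m+2) (k'+1) := by
    rw [cmz, cmz, cmz, cmz, cmz, cmz, cmz, cmz, cmz]
    push_cast
    ring_nf
    ring_nf at h
    omega
  exact_mod_cast goalZ

/-- The ten-term recurrence for the `m = 3` `n`-tile tiling triangle, in
nonnegative form, for `n ≥ 4` and `k ≥ 4`. -/
theorem stmt_18 (n k : ℕ) (hn : 4 ≤ n) (hk : 4 ≤ k) :
    T n k + T (n - 2) (k - 1) + T (n - 4) (k - 3) + T (n - 4) (k - 4)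
      = T (n - 1) k + T (n - 1) (k - 1) + T (n - 3) (k - 1)
          + T (n - 3) (k - 2) + T (n - 3) (k - 3) := by
  obtain ⟨n', rfl⟩ : ∃ n', n = n' + 4 := ⟨n - 4, by omega⟩
  obtain ⟨k', rfl⟩ : ∃ k', k = k' + 4 := ⟨k - 4, by omega⟩
  simp only [T]
  rw [show n'+4-2 = n'+2 by omega, show n'+4-4 = n' by omega, show n'+4-1 = n'+3 by omega,
    show n'+4-3 = n'+1 by omega, show k'+4-1 = k'+3 by omega, show k'+4-3 = k'+1 by omega,
    show k'+4-4 = k' by omega, show k'+4-2 = k'+2 by omega]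
  rcases Nat.lt_or_ge (n' + k') 3 with hs | hs
  · have hn2 : n' ≤ 2 := by omega
    have hk2 : k' ≤ 2 := by omega
    interval_cases n' <;> interval_cases k' <;>
      · zify
        simp only [cmz]
        decide
  · obtain ⟨m, hm⟩ : ∃ m, n' + k' = m + 3 := ⟨n' + k' - 3, by omega⟩
    rw [show n'+4+(k'+4)-3 = m+8 by omega, show n'+2+(k'+3)-3 = m+5 by omega,
      show n'+(k'+1)-3 = m+1 by omega, show n'+k'-3 = m by omega,
      show n'+3+(k'+4)-3 = m+7 by omega, show n'+3+(k'+3)-3 = m+6 by omega,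
      show n'+1+(k'+3)-3 = m+4 by omega, show n'+1+(k'+2)-3 = m+3 by omega,
      show n'+1+(k'+1)-3 = m+2 by omega]
    exact key m k'
end
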